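/- arXiv:2211.12738 — 8 statements merged into one kernel-verified Lean document; each statement's English description precedes it below -/
import Mathlib

section
/- There exists a constant ζ > 0 (one may take ζ = 0.01) such that for every ε > 0 and all positive integers n ≥ 2 and m, the following holds with c = ⌊ζ·√(m/n)⌋: for every agent-level ε-differentially private randomized algorithm M mapping profiles of binary additive utility functions (for n agents and m items) to probability distributions over allocations, there exists a profile u of binary additive utility functions such that the probability that M(u) outputs an allocation that is PROPc with respect to u is at most 1 − e^{−ε}/(8n). -/
lemma cbsq (k : ℕ) : Nat.centralBinom k ^ 2 * (3*k+1) ≤ 16 ^ k := by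
  induction k with
  | zero => simp [Nat.centralBinom]
  | succ k ih =>
    have h := Nat.succ_mul_centralBinom_succ k
    have hpos : 0 < (k+1)^2 * (3*k+1) := by positivity
    refine Nat.le_of_mul_le_mul_left ?_ hpos
    calc (k+1)^2 * (3*k+1) * (Nat.centralBinom (k+1) ^ 2 * (3*(k+1)+1))
        = ((k+1) * Nat.centralBinom (k+1))^2 * ((3*k+1) * (3*k+4)) := by ring
      _ = (2 * (2*k+1) * Nat.centralBinom k)^2 * ((3*k+1) * (3*k+4)) := by rw [h]
      _ = (4 * (2*k+1)^2 * (3*k+4)) * (Nat.centralBinom k ^ 2 * (3*k+1)) := by ring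
      _ ≤ (4 * (2*k+1)^2 * (3*k+4)) * 16 ^ k := Nat.mul_le_mul_left _ ih
      _ ≤ (16 * (k+1)^2 * (3*k+1)) * 16 ^ k := by
          refine Nat.mul_le_mul_right _ ?_
          nlinarith
      _ = (k+1)^2 * (3*k+1) * 16 ^ (k+1) := by ring

-- b * C(b, b/2)^2 ≤ 4^b
lemma choose_half_sq (b : ℕ) : b * (Nat.choose b (b/2))^2 ≤ 4 ^ b := by
  rcases Nat.even_or_odd b with he | ho
  · obtain ⟨k, hk⟩ := he
    have hk' : b = 2*k := by omega
    subst hk'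
    have h2 : (2*k)/2 = k := by omega
    rw [h2]
    have hcb : Nat.choose (2*k) k = Nat.centralBinom k := rfl
    rw [hcb]
    calc (2*k) * Nat.centralBinom k ^ 2 ≤ Nat.centralBinom k ^ 2 * (3*k+1) := by nlinarith
      _ ≤ 16 ^ k := cbsq k
      _ = 4 ^ (2*k) := by rw [show (16:ℕ) = 4^2 by norm_num, ← pow_mul, mul_comm 2 k]
  · obtain ⟨k, hk⟩ := ho
    subst hk
    have h2 : (2*k+1)/2 = k := by omega
    rw [h2]
    have hdouble : 2 * Nat.choose (2*k+1) k = Nat.centralBinom (k+1) := by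
      have h1 : Nat.centralBinom (k+1) = Nat.choose (2*(k+1)) (k+1) := rfl
      have h3 : 2*(k+1) = (2*k+1) + 1 := by ring
      rw [h1, h3, Nat.choose_succ_succ' (2*k+1)]
      have hsymm : Nat.choose (2*k+1) (k+1) = Nat.choose (2*k+1) k := by
        have := Nat.choose_symm (show k ≤ 2*k+1 by omega)
        have hd : 2*k+1-k = k+1 := by omega
        rw [hd] at this
        exact this
      omega
    have key : (2*k+1) * (2 * Nat.choose (2*k+1) k)^2 ≤ 16^(k+1) := by
      rw [hdouble]
      calc (2*k+1) * Nat.centralBinom (k+1) ^ 2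
          ≤ Nat.centralBinom (k+1) ^2 * (3*(k+1)+1) := by nlinarith
        _ ≤ 16 ^ (k+1) := cbsq (k+1)
    have h16 : (16:ℕ)^(k+1) = 4 * 4 ^ (2*k+1) := by
      rw [show (16:ℕ) = 4^2 by norm_num, ← pow_mul]
      rw [show 2*(k+1) = (2*k+1)+1 by ring, pow_succ]
      ring
    have h4 : 4 * ((2*k+1) * Nat.choose (2*k+1) k ^ 2) ≤ 4 * (4 ^ (2*k+1)) := by
      calc 4 * ((2*k+1) * Nat.choose (2*k+1) k ^ 2)
          = (2*k+1) * (2 * Nat.choose (2*k+1) k)^2 := by ring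
        _ ≤ 16^(k+1) := key
        _ = 4 * 4 ^ (2*k+1) := h16
    exact Nat.le_of_mul_le_mul_left h4 (by norm_num)

variable {α : Type*} [DecidableEq α]

lemma sdiff_inj_on (B : Finset α) : Set.InjOn (fun P => B \ P) ↑B.powerset := by
  intro P hP Q hQ h
  simp only [Finset.coe_powerset, Set.mem_preimage, Set.mem_powerset_iff,
    Finset.coe_subset] at hP hQ
  have h1 : B \ (B \ P) = P := by
    rw [Finset.sdiff_sdiff_self_left, Finset.inter_eq_right.2 hP]
  have h2 : B \ (B \ Q) = Q := by
    rw [Finset.sdiff_sdiff_self_left, Finset.inter_eq_right.2 hQ]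
  rw [← h1, ← h2]
  exact congrArg (B \ ·) h

lemma hi_half (B : Finset α) :
    2 ^ B.card ≤ 2 * (B.powerset.filter (fun P => B.card ≤ 2*P.card)).card := by
  classical
  have h1 := Finset.card_filter_add_card_filter_not
    (s := B.powerset) (p := fun P => B.card ≤ 2*P.card)
  have h2 : (B.powerset.filter (fun P => ¬ (B.card ≤ 2*P.card))).card ≤
      (B.powerset.filter (fun P => B.card ≤ 2*P.card)).card := by
    apply Finset.card_le_card_of_injOn (fun P => B \ P)
    · intro P hP
      simp only [Finset.mem_coe, Finset.mem_filter, Finset.mem_powerset] at hP ⊢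
      have hcard : (B \ P).card = B.card - P.card := Finset.card_sdiff_of_subset hP.1
      have hle := Finset.card_le_card hP.1
      exact ⟨Finset.sdiff_subset, by omega⟩
    · exact (sdiff_inj_on B).mono (Finset.coe_subset.2 (Finset.filter_subset _ _))
  have hpow : B.powerset.card = 2 ^ B.card := Finset.card_powerset B
  omega

lemma lo_tail (B : Finset α) (s : ℕ) (hb : 1 ≤ B.card)
    (hcase : s = 0 ∨ 4*(s+1)^2 ≤ B.card) :
    2 ^ B.card ≤ 4 * (B.powerset.filter (fun P => 2*P.card + s < B.card)).card := by
  classical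
  have h1 := Finset.card_filter_add_card_filter_not
    (s := B.powerset) (p := fun P => 2*P.card + s < B.card)
  have h2 := Finset.card_filter_add_card_filter_not
    (s := B.powerset.filter (fun P => ¬ (2*P.card + s < B.card)))
    (p := fun P => B.card + s < 2*P.card)
  rw [Finset.filter_filter, Finset.filter_filter] at h2
  have hpow : B.powerset.card = 2 ^ B.card := Finset.card_powerset B
  -- Hi injects into Lo
  have hHiLo : (B.powerset.filter
        (fun P => ¬ (2*P.card + s < B.card) ∧ B.card + s < 2*P.card)).card ≤
      (B.powerset.filter (fun P => 2*P.card + s < B.card)).card := by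
    apply Finset.card_le_card_of_injOn (fun P => B \ P)
    · intro P hP
      simp only [Finset.mem_coe, Finset.mem_filter, Finset.mem_powerset] at hP ⊢
      have hcard : (B \ P).card = B.card - P.card := Finset.card_sdiff_of_subset hP.1
      have hle := Finset.card_le_card hP.1
      refine ⟨Finset.sdiff_subset, by omega⟩
    · exact (sdiff_inj_on B).mono (Finset.coe_subset.2 (Finset.filter_subset _ _))
  -- Mid is small
  have hMidCard : (B.powerset.filter
        (fun P => ¬ (2*P.card + s < B.card) ∧ ¬ (B.card + s < 2*P.card))).card ≤
      (s+1) * Nat.choose B.card (B.card/2) := by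
    have hsub : (B.powerset.filter
          (fun P => ¬ (2*P.card + s < B.card) ∧ ¬ (B.card + s < 2*P.card))) ⊆
        (Finset.Icc ((B.card - s + 1)/2) ((B.card - s + 1)/2 + s)).biUnion
          (fun x => Finset.powersetCard x B) := by
      intro P hP
      simp only [Finset.mem_filter, Finset.mem_powerset] at hP
      rw [Finset.mem_biUnion]
      refine ⟨P.card, ?_, ?_⟩
      · rw [Finset.mem_Icc]; omega
      · rw [Finset.mem_powersetCard]; exact ⟨hP.1, rfl⟩
    calc (B.powerset.filter
          (fun P => ¬ (2*P.card + s < B.card) ∧ ¬ (B.card + s < 2*P.card))).card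
        ≤ _ := Finset.card_le_card hsub
      _ ≤ ∑ x ∈ Finset.Icc ((B.card - s + 1)/2) ((B.card - s + 1)/2 + s),
          (Finset.powersetCard x B).card := Finset.card_biUnion_le
      _ ≤ ∑ x ∈ Finset.Icc ((B.card - s + 1)/2) ((B.card - s + 1)/2 + s),
          Nat.choose B.card (B.card/2) := by
          refine Finset.sum_le_sum ?_
          intro x _
          rw [Finset.card_powersetCard]
          exact Nat.choose_le_middle x B.card
      _ = (s+1) * Nat.choose B.card (B.card/2) := by
          rw [Finset.sum_const, Nat.card_Icc, smul_eq_mul]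
          congr 1
          omega
  -- 2 * (s+1) * C(b, b/2) ≤ 2^b
  have hch : 2 * ((s+1) * Nat.choose B.card (B.card/2)) ≤ 2 ^ B.card := by
    have hsq := choose_half_sq B.card
    rcases hcase with hs0 | hs1
    · subst hs0
      rcases Nat.lt_or_ge B.card 4 with hb4 | hb4
      · have h1 : Nat.choose 1 0 = 1 := by decide
        have h2 : Nat.choose 2 1 = 2 := by decide
        have h3 : Nat.choose 3 1 = 3 := by decide
        interval_cases h : B.card <;> simp_all
      · have h4 : (2 * ((0+1) * Nat.choose B.card (B.card/2)))^2 ≤ (2^B.card)^2 := by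
          have he : (2 * ((0+1) * Nat.choose B.card (B.card/2)))^2
              = 4 * Nat.choose B.card (B.card/2) ^2 := by ring
          rw [he]
          calc 4 * Nat.choose B.card (B.card/2) ^2
              ≤ B.card * Nat.choose B.card (B.card/2)^2 := Nat.mul_le_mul_right _ hb4
            _ ≤ 4^B.card := hsq
            _ = (2^B.card)^2 := by
                rw [show (4:ℕ) = 2^2 by norm_num, ← pow_mul, pow_mul']
        exact (Nat.pow_le_pow_iff_left (n := 2) (by norm_num)).mp h4
    · have h4 : (2 * ((s+1) * Nat.choose B.card (B.card/2)))^2 ≤ (2^B.card)^2 := by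
        have he : (2 * ((s+1) * Nat.choose B.card (B.card/2)))^2
            = (4*(s+1)^2) * Nat.choose B.card (B.card/2) ^2 := by ring
        rw [he]
        calc (4*(s+1)^2) * Nat.choose B.card (B.card/2) ^2
            ≤ B.card * Nat.choose B.card (B.card/2)^2 := Nat.mul_le_mul_right _ hs1
          _ ≤ 4^B.card := hsq
          _ = (2^B.card)^2 := by
              rw [show (4:ℕ) = 2^2 by norm_num, ← pow_mul, pow_mul']
      exact (Nat.pow_le_pow_iff_left (n := 2) (by norm_num)).mp h4
  omega

lemma lo_half {α : Type*} [DecidableEq α] (B : Finset α) :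
    2 ^ B.card ≤ 2 * (B.powerset.filter (fun P => 2*P.card ≤ B.card)).card := by
  classical
  have h1 := Finset.card_filter_add_card_filter_not
    (s := B.powerset) (p := fun P => 2*P.card ≤ B.card)
  have h2 : (B.powerset.filter (fun P => ¬ (2*P.card ≤ B.card))).card ≤
      (B.powerset.filter (fun P => 2*P.card ≤ B.card)).card := by
    apply Finset.card_le_card_of_injOn (fun P => B \ P)
    · intro P hP
      simp only [Finset.mem_coe, Finset.mem_filter, Finset.mem_powerset] at hP ⊢
      have hcard : (B \ P).card = B.card - P.card := Finset.card_sdiff_of_subset hP.1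
      have hle := Finset.card_le_card hP.1
      exact ⟨Finset.sdiff_subset, by omega⟩
    · exact (sdiff_inj_on B).mono (Finset.coe_subset.2 (Finset.filter_subset _ _))
  have hpow : B.powerset.card = 2 ^ B.card := Finset.card_powerset B
  omega

lemma union_inj {m : ℕ} (B : Finset (Fin m)) (FL FR : Finset (Finset (Fin m)))
    (hFL : FL ⊆ B.powerset) (hFR : FR ⊆ (Finset.univ \ B).powerset)
    (target : Finset (Finset (Fin m)))
    (hmaps : ∀ P ∈ FL, ∀ Q ∈ FR, P ∪ Q ∈ target) :
    FL.card * FR.card ≤ target.card := by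
  classical
  rw [← Finset.card_product]
  apply Finset.card_le_card_of_injOn (fun PQ => PQ.1 ∪ PQ.2)
  · rintro ⟨P, Q⟩ hPQ
    rw [Finset.mem_coe, Finset.mem_product] at hPQ
    exact hmaps P hPQ.1 Q hPQ.2
  · rintro ⟨P, Q⟩ hPQ ⟨P', Q'⟩ hPQ' heq
    simp only [Finset.coe_product, Set.mem_prod, Finset.mem_coe] at hPQ hPQ'
    obtain ⟨hP, hQ⟩ := hPQ
    obtain ⟨hP', hQ'⟩ := hPQ'
    have hPB := Finset.mem_powerset.1 (hFL hP)
    have hP'B := Finset.mem_powerset.1 (hFL hP')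
    have hQR := Finset.subset_sdiff.1 (Finset.mem_powerset.1 (hFR hQ))
    have hQ'R := Finset.subset_sdiff.1 (Finset.mem_powerset.1 (hFR hQ'))
    simp only at heq
    have hrec : ∀ P₀ Q₀ : Finset (Fin m), P₀ ⊆ B → Disjoint Q₀ B →
        (P₀ ∪ Q₀) ∩ B = P₀ := by
      intro P₀ Q₀ h1 h2
      rw [Finset.union_inter_distrib_right, Finset.inter_eq_left.2 h1,
        Finset.disjoint_iff_inter_eq_empty.1 h2, Finset.union_empty]
    have hrec2 : ∀ P₀ Q₀ : Finset (Fin m), P₀ ⊆ B → Disjoint Q₀ B →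
        (P₀ ∪ Q₀) \ B = Q₀ := by
      intro P₀ Q₀ h1 h2
      rw [Finset.union_sdiff_distrib, Finset.sdiff_eq_empty_iff_subset.2 h1,
        Finset.empty_union, Finset.sdiff_eq_self_of_disjoint h2]
    have e1 : P = P' := by
      rw [← hrec P Q hPB hQR.2, ← hrec P' Q' hP'B hQ'R.2, heq]
    have e2 : Q = Q' := by
      rw [← hrec2 P Q hPB hQR.2, ← hrec2 P' Q' hP'B hQ'R.2, heq]
    rw [Prod.mk.injEq]
    exact ⟨e1, e2⟩

set_option maxHeartbeats 2000000 in
lemma count_bad {m : ℕ} (n c : ℕ) (hn : 2 ≤ n) (hm : 1 ≤ m)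
    (B : Finset (Fin m)) (hB : n * B.card ≤ m)
    (hcR : (c:ℝ) ≤ Real.sqrt ((m:ℝ)/n) / 100)
    (hcbig : c ≠ 0 → (100:ℝ) ≤ Real.sqrt ((m:ℝ)/n)) :
    2 ^ m ≤ 8 * ((Finset.univ : Finset (Finset (Fin m))).filter
        (fun T => n * ((B ∩ T).card + c) < T.card)).card := by
  classical
  set b := B.card with hbdef
  set R := (Finset.univ : Finset (Fin m)) \ B with hRdef
  have hnpos : (0:ℝ) < n := by
    have : 0 < n := by omega
    exact_mod_cast this
  have hq : Real.sqrt ((m:ℝ)/n) ^ 2 = (m:ℝ)/n := Real.sq_sqrt (by positivity)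
  have hq0 : (0:ℝ) ≤ Real.sqrt ((m:ℝ)/n) := Real.sqrt_nonneg _
  have hq2 : Real.sqrt ((m:ℝ)/n) ^ 2 * n = m := by
    rw [hq]; field_simp
  set q := Real.sqrt ((m:ℝ)/n) with hqdef
  have hbm : b ≤ m := by
    simpa using Finset.card_le_card (Finset.subset_univ B)
  have hr : R.card = m - b := by
    rw [hRdef, Finset.card_sdiff_of_subset (Finset.subset_univ B)]
    simp [hbdef]
  have hbr : b + R.card = m := by omega
  set target := (Finset.univ : Finset (Finset (Fin m))).filter
        (fun T => n * ((B ∩ T).card + c) < T.card) with htarget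
  set FR := R.powerset.filter (fun Q => R.card ≤ 2*Q.card) with hFRdef
  have hFR : 2 ^ R.card ≤ 2 * FR.card := hi_half R
  rcases Nat.lt_or_ge (n*b + 2*n*c) m with hA | hB2
  · -- case A
    set FL := B.powerset.filter (fun P => 2*P.card ≤ b) with hFLdef
    have hFL : 2 ^ b ≤ 2 * FL.card := lo_half B
    have hmaps : ∀ P ∈ FL, ∀ Q ∈ FR, P ∪ Q ∈ target := by
      intro P hP Q hQ
      simp only [hFLdef, hFRdef, Finset.mem_filter, Finset.mem_powerset] at hP hQ
      obtain ⟨hPB, hPc⟩ := hP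
      obtain ⟨hQR, hQc⟩ := hQ
      have hdisj : Disjoint Q B := (Finset.subset_sdiff.1 hQR).2
      have hdisjPQ : Disjoint P Q := Finset.disjoint_of_subset_left hPB hdisj.symm
      rw [htarget, Finset.mem_filter]
      refine ⟨Finset.mem_univ _, ?_⟩
      have hcap : B ∩ (P ∪ Q) = P := by
        rw [Finset.inter_union_distrib_left, Finset.inter_eq_right.2 hPB,
          Finset.disjoint_iff_inter_eq_empty.1 hdisj.symm, Finset.union_empty]
      have hcard : (P ∪ Q).card = P.card + Q.card := Finset.card_union_of_disjoint hdisjPQ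
      rw [hcap, hcard]
      rw [← Nat.cast_lt (α := ℝ)]
      push_cast
      have f1 : (2:ℝ) * P.card ≤ b := by exact_mod_cast hPc
      have f2 : (m:ℝ) ≤ b + 2 * Q.card := by
        have h2Q : (R.card : ℝ) ≤ 2 * Q.card := by exact_mod_cast hQc
        have hbr' : (b:ℝ) + R.card = m := by exact_mod_cast hbr
        linarith
      have f3 : (n:ℝ)*b + 2*n*c + 1 ≤ m := by exact_mod_cast hA
      have hn' : (2:ℝ) ≤ n := by exact_mod_cast hn
      nlinarith [mul_nonneg (show (0:ℝ) ≤ (n:ℝ) - 1 by linarith)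
        (show (0:ℝ) ≤ (b:ℝ) - 2*P.card by linarith)]
    have hprod := union_inj B FL FR (Finset.filter_subset _ _)
      (Finset.filter_subset _ _) target hmaps
    calc 2^m = 2^b * 2^(R.card) := by rw [← pow_add, hbr]
      _ ≤ (2 * FL.card) * (2 * FR.card) := Nat.mul_le_mul hFL hFR
      _ = 4 * (FL.card * FR.card) := by ring
      _ ≤ 4 * target.card := Nat.mul_le_mul_left _ hprod
      _ ≤ 8 * target.card := Nat.mul_le_mul_right _ (by norm_num)
  · -- case B
    have hb1 : 1 ≤ b := by
      by_contra hcon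
      have hb0 : b = 0 := by omega
      rw [hb0] at hB2
      rcases Nat.eq_zero_or_pos c with hc0 | hc1
      · rw [hc0] at hB2; simp at hB2; omega
      · have h100 := hcbig (by omega)
        have hmn : (m:ℝ) ≤ 2*n*c := by
          have hx : (m:ℝ) ≤ n*0 + 2*n*c := by exact_mod_cast hB2
          linarith
        have hcq : (c:ℝ) ≤ q/100 := hcR
        have hqq : q^2 * n ≤ (q/50) * n := by nlinarith
        have hq50 : q^2 ≤ q/50 := le_of_mul_le_mul_right hqq hnpos
        nlinarith [mul_le_mul_of_nonneg_right h100 hq0]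
    have hcaseB : 4*c = 0 ∨ 4*(4*c+1)^2 ≤ b := by
      rcases Nat.eq_zero_or_pos c with hc0 | hc1
      · left; omega
      · right
        have h100 := hcbig (by omega)
        have hmb : (m:ℝ) ≤ n*b + 2*n*c := by exact_mod_cast hB2
        have hqb : q^2 - 2*c ≤ (b:ℝ) := by
          have hx : q^2 * n ≤ ((b:ℝ) + 2*c) * n := by nlinarith
          have := le_of_mul_le_mul_right hx hnpos
          linarith
        have hcq : (c:ℝ) ≤ q/100 := hcR
        have h1 : 4*(c:ℝ)+1 ≤ q/20 := by linarith
        have h2 : (4*(c:ℝ)+1)^2 ≤ (q/20)^2 := by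
          have h0 : (0:ℝ) ≤ 4*(c:ℝ)+1 := by positivity
          exact pow_le_pow_left₀ h0 h1 2
        have hq20 : (q/20)^2 = q^2/400 := by ring
        have hqsq : 100*q ≤ q^2 := by
          rw [pow_two]
          exact mul_le_mul_of_nonneg_right h100 hq0
        have hgoal : (4*(4*(c:ℝ)+1)^2) ≤ (b:ℝ) := by
          rw [hq20] at h2
          linarith
        exact_mod_cast hgoal
    set FL := B.powerset.filter (fun P => 2*P.card + 4*c < b) with hFLdef
    have hFL : 2 ^ b ≤ 4 * FL.card := lo_tail B (4*c) hb1 hcaseB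
    have hmaps : ∀ P ∈ FL, ∀ Q ∈ FR, P ∪ Q ∈ target := by
      intro P hP Q hQ
      simp only [hFLdef, hFRdef, Finset.mem_filter, Finset.mem_powerset] at hP hQ
      obtain ⟨hPB, hPc⟩ := hP
      obtain ⟨hQR, hQc⟩ := hQ
      have hdisj : Disjoint Q B := (Finset.subset_sdiff.1 hQR).2
      have hdisjPQ : Disjoint P Q := Finset.disjoint_of_subset_left hPB hdisj.symm
      rw [htarget, Finset.mem_filter]
      refine ⟨Finset.mem_univ _, ?_⟩
      have hcap : B ∩ (P ∪ Q) = P := by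
        rw [Finset.inter_union_distrib_left, Finset.inter_eq_right.2 hPB,
          Finset.disjoint_iff_inter_eq_empty.1 hdisj.symm, Finset.union_empty]
      have hcard : (P ∪ Q).card = P.card + Q.card := Finset.card_union_of_disjoint hdisjPQ
      rw [hcap, hcard]
      rw [← Nat.cast_lt (α := ℝ)]
      push_cast
      have f1 : (2:ℝ)*P.card + 4*c + 1 ≤ b := by exact_mod_cast hPc
      have f2 : (m:ℝ) ≤ b + 2 * Q.card := by
        have h2Q : (R.card : ℝ) ≤ 2 * Q.card := by exact_mod_cast hQc
        have hbr' : (b:ℝ) + R.card = m := by exact_mod_cast hbr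
        linarith
      have f3 : (n:ℝ)*b ≤ m := by exact_mod_cast hB
      have hn' : (2:ℝ) ≤ n := by exact_mod_cast hn
      nlinarith [mul_nonneg (show (0:ℝ) ≤ (n:ℝ) - 1 by linarith)
        (show (0:ℝ) ≤ (b:ℝ) - 2*P.card - 4*c - 1 by linarith),
        mul_nonneg (show (0:ℝ) ≤ (n:ℝ) - 2 by linarith)
        (show (0:ℝ) ≤ (c:ℝ) by positivity)]
    have hprod := union_inj B FL FR (Finset.filter_subset _ _)
      (Finset.filter_subset _ _) target hmaps
    calc 2^m = 2^b * 2^(R.card) := by rw [← pow_add, hbr]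
      _ ≤ (4 * FL.card) * (2 * FR.card) := Nat.mul_le_mul hFL hFR
      _ = 8 * (FL.card * FR.card) := by ring
      _ ≤ 8 * target.card := Nat.mul_le_mul_left _ hprod

open scoped ENNReal

def IsPartition {n m : ℕ} (A : Fin n → Finset (Fin m)) : Prop :=
  (∀ i j : Fin n, i ≠ j → Disjoint (A i) (A j)) ∧
    Finset.univ.biUnion A = (Finset.univ : Finset (Fin m))

def Alloc (n m : ℕ) : Type := {A : Fin n → Finset (Fin m) // IsPartition A}

/-- Proportionality up to `c` items. -/
def PROP {n m : ℕ} (c : ℕ) (u : Fin n → Finset (Fin m) → ℝ)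
    (A : Fin n → Finset (Fin m)) : Prop :=
  ∀ i : Fin n, ∃ S ⊆ (Finset.univ : Finset (Fin m)) \ A i, S.card ≤ c ∧
    u i (A i) ≥ u i Finset.univ / (n : ℝ) - u i S

def binUtil {m : ℕ} (v : Fin m → Bool) (S : Finset (Fin m)) : ℝ :=
  ((S.filter fun j => v j = true).card : ℝ)

def AgentAdj {n m : ℕ} (v v' : Fin n → Fin m → Bool) : Prop :=
  ∃ iStar : Fin n, ∀ i : Fin n, i ≠ iStar → v i = v' i

def vpro {n m : ℕ} (i : Fin n) (T : Finset (Fin m)) : Fin n → Fin m → Bool :=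
  fun j x => decide (j = i ∧ x ∈ T)

lemma vpro_util_self {n m : ℕ} (i : Fin n) (T S : Finset (Fin m)) :
    binUtil (vpro i T i) S = ((S ∩ T).card : ℝ) := by
  unfold binUtil vpro
  congr 2
  ext x
  simp [Finset.mem_inter]

lemma vpro_util_other {n m : ℕ} {i j : Fin n} (T S : Finset (Fin m)) (hj : j ≠ i) :
    binUtil (vpro i T j) S = 0 := by
  unfold binUtil vpro
  rw [Finset.filter_false_of_mem (fun x _ => by simp [hj])]
  simp

lemma exists_small_bundle {n m : ℕ} (hn : 1 ≤ n) (A : Alloc n m) :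
    ∃ i : Fin n, n * (A.val i).card ≤ m := by
  by_contra h
  push_neg at h
  have hsum : ∑ i : Fin n, (A.val i).card = m := by
    rw [← Finset.card_biUnion (fun x _ y _ hxy => A.2.1 x y hxy), A.2.2,
      Finset.card_univ, Fintype.card_fin]
  have h1 : ∑ _i : Fin n, (m+1) ≤ ∑ i : Fin n, n * (A.val i).card :=
    Finset.sum_le_sum (fun i _ => h i)
  rw [Finset.sum_const, Finset.card_univ, Fintype.card_fin, smul_eq_mul,
    ← Finset.mul_sum, hsum] at h1
  have h2 : n * (m+1) = n*m + n := by ring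
  omega

lemma bad_not_prop {n m : ℕ} (hn : 2 ≤ n) (c : ℕ) (i : Fin n) (T : Finset (Fin m))
    (A : Fin n → Finset (Fin m))
    (hbad : n * ((A i ∩ T).card + c) < T.card) :
    ¬ PROP c (fun j => binUtil (vpro i T j)) A := by
  intro hprop
  obtain ⟨S, hS, hcard, hineq⟩ := hprop i
  have hn0 : (0:ℝ) < n := by
    have : 0 < n := by omega
    exact_mod_cast this
  simp only [vpro_util_self] at hineq
  have hUT : (Finset.univ ∩ T) = T := by
    rw [Finset.inter_eq_right]
    exact Finset.subset_univ T
  rw [hUT] at hineq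
  have huS : ((S ∩ T).card : ℝ) ≤ (c : ℝ) := by
    have h1 : (S ∩ T).card ≤ S.card := Finset.card_le_card (Finset.inter_subset_left)
    exact_mod_cast le_trans h1 hcard
  have hmul : (T.card : ℝ) ≤ (((A i ∩ T).card : ℝ) + ((S ∩ T).card : ℝ)) * n := by
    have hdiv : (T.card : ℝ)/n ≤ ((A i ∩ T).card : ℝ) + ((S ∩ T).card : ℝ) := by
      linarith
    exact (div_le_iff₀ hn0).1 hdiv
  have hbadR : ((n:ℝ)) * (((A i ∩ T).card : ℝ) + (c:ℝ)) < T.card := by exact_mod_cast hbad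
  have hc : ((S ∩ T).card : ℝ) * n ≤ (c:ℝ) * n :=
    mul_le_mul_of_nonneg_right huS (le_of_lt hn0)
  nlinarith

set_option maxHeartbeats 2000000 in
theorem agent_level_PROP_lower_bound :
    ∃ ζ : ℝ, 0 < ζ ∧
      ∀ ε : ℝ, 0 < ε → ∀ n m : ℕ, 2 ≤ n → 1 ≤ m →
        ∀ M : (Fin n → Fin m → Bool) → PMF (Alloc n m),
          (∀ v v', AgentAdj v v' →
            ∀ o, M v o ≤ ENNReal.ofReal (Real.exp ε) * M v' o) →
          ∃ v : Fin n → Fin m → Bool,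
            (M v).toOuterMeasure
                {A : Alloc n m |
                  PROP (⌊ζ * Real.sqrt ((m : ℝ) / n)⌋₊)
                    (fun i => binUtil (v i)) A.val}
              ≤ ENNReal.ofReal (1 - Real.exp (-ε) / (8 * n)) := by
  classical
  refine ⟨1/100, by norm_num, ?_⟩
  intro ε hε n m hn hm M hDP
  set c := ⌊(1/100 : ℝ) * Real.sqrt ((m : ℝ) / n)⌋₊ with hcdef
  have hsq0 : (0:ℝ) ≤ (1/100) * Real.sqrt ((m:ℝ)/n) := by positivity
  have hcR : (c:ℝ) ≤ Real.sqrt ((m:ℝ)/n) / 100 := by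
    have h := Nat.floor_le hsq0
    rw [← hcdef] at h
    linarith
  have hcbig : c ≠ 0 → (100:ℝ) ≤ Real.sqrt ((m:ℝ)/n) := by
    intro hc0
    have hpos : 0 < c := Nat.pos_of_ne_zero hc0
    rw [hcdef, Nat.floor_pos] at hpos
    linarith
  set v0 : Fin n → Fin m → Bool := fun _ _ => false with hv0
  set p := M v0 with hp
  set Bad : Fin n → Finset (Fin m) → Set (Alloc n m) :=
    fun i T => {A : Alloc n m | n * ((A.val i ∩ T).card + c) < T.card} with hBad
  -- counting step
  have key1 : ∀ A : Alloc n m, ((2^m : ℕ) : ℝ≥0∞) ≤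
      8 * ∑ iT : Fin n × Finset (Fin m),
        (Bad iT.1 iT.2).indicator (fun _ => (1:ℝ≥0∞)) A := by
    intro A
    obtain ⟨i, hi⟩ := exists_small_bundle (by omega) A
    have hcount := count_bad n c hn hm (A.val i) hi hcR hcbig
    have hKsum : ((Finset.univ.filter
        (fun T : Finset (Fin m) => n * (((A.val i) ∩ T).card + c) < T.card)).card : ℝ≥0∞)
        = ∑ T : Finset (Fin m), (Bad i T).indicator (fun _ => (1:ℝ≥0∞)) A := by
      rw [← Finset.sum_boole]
      refine Finset.sum_congr rfl (fun T _ => ?_)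
      by_cases h : A ∈ Bad i T
      · rw [Set.indicator_of_mem h]
        rw [if_pos]
        exact h
      · rw [Set.indicator_of_notMem h]
        rw [if_neg]
        exact h
    have hsingle : ∑ T : Finset (Fin m), (Bad i T).indicator (fun _ => (1:ℝ≥0∞)) A ≤
        ∑ iT : Fin n × Finset (Fin m), (Bad iT.1 iT.2).indicator (fun _ => (1:ℝ≥0∞)) A := by
      rw [Fintype.sum_prod_type]
      exact Finset.single_le_sum
        (f := fun j => ∑ T : Finset (Fin m), (Bad j T).indicator (fun _ => (1:ℝ≥0∞)) A)
        (fun j _ => zero_le) (Finset.mem_univ i)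
    calc ((2^m : ℕ) : ℝ≥0∞) ≤ ((8 * (Finset.univ.filter
          (fun T : Finset (Fin m) => n * (((A.val i) ∩ T).card + c) < T.card)).card : ℕ) : ℝ≥0∞) := by
          exact_mod_cast hcount
      _ = 8 * ((Finset.univ.filter
          (fun T : Finset (Fin m) => n * (((A.val i) ∩ T).card + c) < T.card)).card : ℝ≥0∞) := by
          push_cast; ring
      _ = 8 * ∑ T : Finset (Fin m), (Bad i T).indicator (fun _ => (1:ℝ≥0∞)) A := by rw [hKsum]
      _ ≤ _ := mul_le_mul_right hsingle 8
  -- averaging step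
  set Sm := ∑ iT : Fin n × Finset (Fin m), p.toOuterMeasure (Bad iT.1 iT.2) with hSm
  have hub : ((2^m : ℕ) : ℝ≥0∞) ≤ 8 * Sm := by
    have hswap : Sm = ∑' A : Alloc n m,
        ∑ iT : Fin n × Finset (Fin m), (Bad iT.1 iT.2).indicator p A := by
      rw [hSm]
      rw [Summable.tsum_finsetSum (fun _ _ => ENNReal.summable)]
      exact Finset.sum_congr rfl (fun iT _ => (PMF.toOuterMeasure_apply p _))
    have hptw : ∀ A : Alloc n m, ∑ iT : Fin n × Finset (Fin m), (Bad iT.1 iT.2).indicator p A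
        = p A * ∑ iT : Fin n × Finset (Fin m),
            (Bad iT.1 iT.2).indicator (fun _ => (1:ℝ≥0∞)) A := by
      intro A
      rw [Finset.mul_sum]
      refine Finset.sum_congr rfl (fun iT _ => ?_)
      by_cases h : A ∈ Bad iT.1 iT.2
      · rw [Set.indicator_of_mem h, Set.indicator_of_mem h, mul_one]
      · rw [Set.indicator_of_notMem h, Set.indicator_of_notMem h, mul_zero]
    have e1 : 8 * Sm = ∑' A : Alloc n m, p A *
        (8 * ∑ iT : Fin n × Finset (Fin m),
          (Bad iT.1 iT.2).indicator (fun _ => (1:ℝ≥0∞)) A) := by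
      rw [hswap, ← ENNReal.tsum_mul_left]
      refine tsum_congr (fun A => ?_)
      rw [hptw A]
      ring
    have e2 : ((2^m : ℕ) : ℝ≥0∞) = ∑' A : Alloc n m, p A * ((2^m : ℕ) : ℝ≥0∞) := by
      rw [ENNReal.tsum_mul_right, PMF.tsum_coe, one_mul]
    rw [e1, e2]
    exact ENNReal.tsum_le_tsum (fun A => mul_le_mul_right (key1 A) _)
  -- extraction of a good pair
  have hne : (Finset.univ : Finset (Fin n × Finset (Fin m))).Nonempty :=
    ⟨(⟨0, by omega⟩, ∅), Finset.mem_univ _⟩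
  obtain ⟨iT, _, hiT⟩ := Finset.exists_mem_eq_sup Finset.univ hne
    (fun iT : Fin n × Finset (Fin m) => p.toOuterMeasure (Bad iT.1 iT.2))
  set sup := (Finset.univ : Finset (Fin n × Finset (Fin m))).sup
    (fun iT => p.toOuterMeasure (Bad iT.1 iT.2)) with hsup
  have hSmSup : Sm ≤ ((n * 2^m : ℕ) : ℝ≥0∞) * sup := by
    have h := Finset.sum_le_card_nsmul Finset.univ
      (fun iT : Fin n × Finset (Fin m) => p.toOuterMeasure (Bad iT.1 iT.2)) sup
      (fun x _ => Finset.le_sup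
        (f := fun iT : Fin n × Finset (Fin m) => p.toOuterMeasure (Bad iT.1 iT.2))
        (Finset.mem_univ x))
    rw [Finset.card_univ, Fintype.card_prod, Fintype.card_fin, Fintype.card_finset,
      Fintype.card_fin, nsmul_eq_mul] at h
    exact_mod_cast h
  have ha0 : ((8 * n : ℕ) : ℝ≥0∞) ≠ 0 := by
    simp only [ne_eq, Nat.cast_eq_zero]
    omega
  have hatop : ((8 * n : ℕ) : ℝ≥0∞) ≠ ⊤ := ENNReal.natCast_ne_top _
  have hb0 : ((2^m : ℕ) : ℝ≥0∞) ≠ 0 := by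
    simp only [ne_eq, Nat.cast_eq_zero]
    positivity
  have hbtop : ((2^m : ℕ) : ℝ≥0∞) ≠ ⊤ := ENNReal.natCast_ne_top _
  have hlow : (((8 * n : ℕ) : ℝ≥0∞))⁻¹ ≤ p.toOuterMeasure (Bad iT.1 iT.2) := by
    rw [← hiT]
    have hx : ((2^m : ℕ) : ℝ≥0∞) ≤ (((8 * n : ℕ) : ℝ≥0∞) * ((2^m : ℕ) : ℝ≥0∞)) * sup := by
      calc ((2^m : ℕ) : ℝ≥0∞) ≤ 8 * Sm := hub
        _ ≤ 8 * (((n * 2^m : ℕ) : ℝ≥0∞) * sup) := mul_le_mul_right hSmSup 8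
        _ = (((8 * n : ℕ) : ℝ≥0∞) * ((2^m : ℕ) : ℝ≥0∞)) * sup := by
            push_cast; ring
    have hab0 : (((8 * n : ℕ) : ℝ≥0∞) * ((2^m : ℕ) : ℝ≥0∞)) ≠ 0 := mul_ne_zero ha0 hb0
    have habtop : (((8 * n : ℕ) : ℝ≥0∞) * ((2^m : ℕ) : ℝ≥0∞)) ≠ ⊤ :=
      ENNReal.mul_ne_top hatop hbtop
    have h2 := mul_le_mul_right hx ((((8 * n : ℕ) : ℝ≥0∞) * ((2^m : ℕ) : ℝ≥0∞))⁻¹)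
    rw [← mul_assoc, ENNReal.inv_mul_cancel hab0 habtop, one_mul] at h2
    calc (((8 * n : ℕ) : ℝ≥0∞))⁻¹
        = (((8 * n : ℕ) : ℝ≥0∞) * ((2^m : ℕ) : ℝ≥0∞))⁻¹ * ((2^m : ℕ) : ℝ≥0∞) := by
          rw [ENNReal.mul_inv (Or.inl ha0) (Or.inl hatop), mul_assoc,
            ENNReal.inv_mul_cancel hb0 hbtop, mul_one]
      _ ≤ sup := h2
  obtain ⟨i, T⟩ := iT
  -- the adversarial profile
  refine ⟨vpro i T, ?_⟩
  have hadj : AgentAdj v0 (vpro i T) := by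
    refine ⟨i, fun j hj => ?_⟩
    funext x
    simp only [hv0, vpro]
    symm
    rw [decide_eq_false_iff_not]
    tauto
  set E := ENNReal.ofReal (Real.exp ε) with hE
  have hE0 : E ≠ 0 := by
    rw [hE, ne_eq, ENNReal.ofReal_eq_zero, not_le]
    exact Real.exp_pos ε
  have hEtop : E ≠ ⊤ := ENNReal.ofReal_ne_top
  have hDPstep : p.toOuterMeasure (Bad i T) ≤ E * (M (vpro i T)).toOuterMeasure (Bad i T) := by
    rw [PMF.toOuterMeasure_apply, PMF.toOuterMeasure_apply, ← ENNReal.tsum_mul_left]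
    refine ENNReal.tsum_le_tsum (fun A => ?_)
    by_cases h : A ∈ Bad i T
    · rw [Set.indicator_of_mem h, Set.indicator_of_mem h]
      exact hDP v0 (vpro i T) hadj A
    · rw [Set.indicator_of_notMem h, Set.indicator_of_notMem h, mul_zero]
  have hlow2 : E⁻¹ * (((8 * n : ℕ) : ℝ≥0∞))⁻¹ ≤ (M (vpro i T)).toOuterMeasure (Bad i T) := by
    have h1 : (((8 * n : ℕ) : ℝ≥0∞))⁻¹ ≤ E * (M (vpro i T)).toOuterMeasure (Bad i T) :=
      le_trans hlow hDPstep
    have h2 := mul_le_mul_right h1 E⁻¹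
    rwa [← mul_assoc, ENNReal.inv_mul_cancel hE0 hEtop, one_mul] at h2
  -- relate the PROP set to the complement of the Bad set
  have hGB : {A : Alloc n m | PROP c (fun j => binUtil (vpro i T j)) A.val}
      ⊆ (Bad i T)ᶜ := by
    intro A hA hbad
    exact bad_not_prop hn c i T A.val hbad hA
  have hcompl : (M (vpro i T)).toOuterMeasure ((Bad i T)ᶜ)
      + (M (vpro i T)).toOuterMeasure (Bad i T) = 1 := by
    rw [PMF.toOuterMeasure_apply, PMF.toOuterMeasure_apply, ← ENNReal.tsum_add]
    rw [← PMF.tsum_coe (M (vpro i T))]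
    refine tsum_congr (fun A => ?_)
    by_cases h : A ∈ Bad i T
    · rw [Set.indicator_of_mem h, Set.indicator_of_notMem (by simpa using h), zero_add]
    · rw [Set.indicator_of_mem (by simpa using h), Set.indicator_of_notMem h, add_zero]
  have hBadtop : (M (vpro i T)).toOuterMeasure (Bad i T) ≠ ⊤ := by
    intro habs
    rw [habs] at hcompl
    simp at hcompl
  have hcompl2 : (M (vpro i T)).toOuterMeasure ((Bad i T)ᶜ)
      = 1 - (M (vpro i T)).toOuterMeasure (Bad i T) := by
    rw [← hcompl, ENNReal.add_sub_cancel_right hBadtop]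
  have hmono : (M (vpro i T)).toOuterMeasure
      {A : Alloc n m | PROP c (fun j => binUtil (vpro i T j)) A.val}
      ≤ (M (vpro i T)).toOuterMeasure ((Bad i T)ᶜ) := by
    rw [PMF.toOuterMeasure_apply, PMF.toOuterMeasure_apply]
    exact ENNReal.tsum_le_tsum (fun A =>
      Set.indicator_le_indicator_of_subset hGB (fun _ => zero_le) A)
  have hGle : (M (vpro i T)).toOuterMeasure
      {A : Alloc n m | PROP c (fun j => binUtil (vpro i T j)) A.val}
      ≤ 1 - E⁻¹ * (((8 * n : ℕ) : ℝ≥0∞))⁻¹ := by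
    refine le_trans hmono (le_trans (le_of_eq hcompl2) ?_)
    exact tsub_le_tsub_left hlow2 1
  -- final numeric comparison
  have hfin : (1 : ℝ≥0∞) - E⁻¹ * (((8 * n : ℕ) : ℝ≥0∞))⁻¹
      = ENNReal.ofReal (1 - Real.exp (-ε) / (8 * n)) := by
    have hexp : Real.exp (-ε) = (Real.exp ε)⁻¹ := Real.exp_neg ε
    have h8n : (0:ℝ) < 8 * (n:ℝ) := by
      have : (0:ℝ) < (n:ℝ) := by exact_mod_cast (by omega : 0 < n)
      linarith
    have hsub : Real.exp (-ε) / (8 * n) = (Real.exp ε)⁻¹ * ((8 * (n:ℝ)))⁻¹ := by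
      rw [hexp, div_eq_mul_inv]
    have hq : ENNReal.ofReal (Real.exp (-ε) / (8 * n))
        = E⁻¹ * (((8 * n : ℕ) : ℝ≥0∞))⁻¹ := by
      rw [hsub, ENNReal.ofReal_mul (by positivity)]
      congr 1
      · rw [ENNReal.ofReal_inv_of_pos (Real.exp_pos ε), hE]
      · rw [ENNReal.ofReal_inv_of_pos h8n]
        congr 1
        rw [show ((8 * n : ℕ) : ℝ≥0∞) = ENNReal.ofReal ((8 * n : ℕ) : ℝ) from
          (ENNReal.ofReal_natCast _).symm]
        congr 1
        push_cast
        ring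
    rw [ENNReal.ofReal_sub _ (by positivity), ENNReal.ofReal_one, hq]
  rw [← hfin]
  exact hGle
end

section
/- Let n ≥ 2 and m be positive integers with m ≥ 100n, let c = ⌊0.01·√(m/n)⌋, let A = (A_1,…,A_n) be an allocation of the m items, and let i be an agent with |A_i| ≤ m/n. Let u = (u_1,…,u_n) be a random profile of binary additive utility functions in which each value u_i(j) for i ∈ [n], j ∈ [m] is an independent Bernoulli(1/2) random variable. Then the probability that A is not PROPc for agent i with respect to u (i.e., there is no S ⊆ M \ A_i with |S| ≤ c such that u_i(A_i) ≥ u_i(M)/n − u_i(S)) is at least 1/8. -/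
/-- `A` is PROPc for agent `i` with respect to utilities `u`. -/
def PROPagent {n m : ℕ} (c : ℕ) (u : Fin n → Finset (Fin m) → ℝ)
    (A : Fin n → Finset (Fin m)) (i : Fin n) : Prop :=
  ∃ S ⊆ (Finset.univ : Finset (Fin m)) \ A i, S.card ≤ c ∧
    u i (A i) ≥ u i Finset.univ / (n : ℝ) - u i S

lemma cb_sq : ∀ k : ℕ, (Nat.centralBinom k)^2 * (3*k+1) ≤ 16^k := by
  intro k
  induction k with
  | zero => simp [Nat.centralBinom]
  | succ k ih =>
    have h := Nat.succ_mul_centralBinom_succ k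
    have hpos : 0 < (k+1)^2 * (3*k+1) := by positivity
    refine Nat.le_of_mul_le_mul_left ?_ hpos
    have e1 : (k+1)^2 * (3*k+1) * ((Nat.centralBinom (k+1))^2 * (3*(k+1)+1)) =
        (3*k+1) * (3*k+4) * ((k+1) * Nat.centralBinom (k+1))^2 := by ring
    rw [e1, h]
    have e2 : (3*k+1) * (3*k+4) * (2 * (2*k+1) * Nat.centralBinom k)^2 =
        (4 * (2*k+1)^2 * (3*k+4)) * ((Nat.centralBinom k)^2 * (3*k+1)) := by ring
    rw [e2]
    calc (4 * (2*k+1)^2 * (3*k+4)) * ((Nat.centralBinom k)^2 * (3*k+1))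
        ≤ (4 * (2*k+1)^2 * (3*k+4)) * 16^k := Nat.mul_le_mul_left _ ih
      _ ≤ (16 * (k+1)^2 * (3*k+1)) * 16^k := by
          apply Nat.mul_le_mul_right
          nlinarith
      _ = (k+1)^2 * (3*k+1) * 16^(k+1) := by ring

lemma sq_le_imp {x y : ℝ} (hx : 0 ≤ x) (hy : 0 ≤ y) (h : x^2 ≤ y^2) : x ≤ y := by
  nlinarith

lemma cb_sqrt (k : ℕ) : (Nat.centralBinom k : ℝ) * Real.sqrt (3*k+1) ≤ 4^k := by
  have h := cb_sq k
  have h' : ((Nat.centralBinom k : ℝ))^2 * (3*(k:ℝ)+1) ≤ (16:ℝ)^k := by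
    exact_mod_cast h
  apply sq_le_imp (by positivity) (by positivity)
  rw [mul_pow, Real.sq_sqrt (by positivity)]
  calc (Nat.centralBinom k : ℝ)^2 * (3*(k:ℝ)+1) ≤ (16:ℝ)^k := h'
    _ = ((4:ℝ)^k)^2 := by rw [← pow_mul, pow_mul']; norm_num

lemma choose_half_sqrt (a : ℕ) :
    (a.choose (a/2) : ℝ) * Real.sqrt a ≤ 2^a := by
  rcases Nat.even_or_odd a with ⟨k, hk⟩ | ⟨k, hk⟩
  · subst hk
    have h2 : (k+k)/2 = k := by omega
    rw [h2]
    have : (k+k).choose k = Nat.centralBinom k := by rw [Nat.centralBinom]; congr 1; omega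
    rw [this]
    push_cast
    calc (Nat.centralBinom k : ℝ) * Real.sqrt ((k:ℝ)+k)
        ≤ (Nat.centralBinom k : ℝ) * Real.sqrt (3*(k:ℝ)+1) := by
          apply mul_le_mul_of_nonneg_left (Real.sqrt_le_sqrt (by push_cast; linarith)) (by positivity)
      _ ≤ 4^k := cb_sqrt k
      _ ≤ 2^((k:ℕ)+k) := by
          rw [show ((2:ℝ))^(k+k) = 4^k by rw [show k+k=2*k by ring, pow_mul]; norm_num]
  · subst hk
    have h2 : (2*k+1)/2 = k := by omega
    rw [h2]
    have hch : (2*k+1).choose k ≤ 2 * Nat.centralBinom k := by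
      cases k with
      | zero => simp [Nat.centralBinom]
      | succ j =>
        have : (2*(j+1)+1) = (2*(j+1)) + 1 := rfl
        rw [this]
        have hp : (2*(j+1)).succ.choose (j+1) = (2*(j+1)).choose j + (2*(j+1)).choose (j+1) :=
          Nat.choose_succ_succ (2*(j+1)) j
        calc (2*(j+1)+1).choose (j+1) = (2*(j+1)).choose j + (2*(j+1)).choose (j+1) := hp
          _ ≤ Nat.centralBinom (j+1) + Nat.centralBinom (j+1) := by
              apply Nat.add_le_add
              · have := Nat.choose_le_middle j (2*(j+1))
                simpa [Nat.centralBinom, Nat.mul_div_cancel_left] using this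
              · simp [Nat.centralBinom]
          _ = 2 * Nat.centralBinom (j+1) := by ring
    push_cast
    calc ((2*k+1).choose k : ℝ) * Real.sqrt (2*(k:ℝ)+1)
        ≤ (2 * Nat.centralBinom k : ℝ) * Real.sqrt (3*(k:ℝ)+1) := by
          apply mul_le_mul (by exact_mod_cast hch) (Real.sqrt_le_sqrt (by push_cast; linarith))
            (by positivity) (by positivity)
      _ = 2 * ((Nat.centralBinom k : ℝ) * Real.sqrt (3*k+1)) := by push_cast; ring
      _ ≤ 2 * 4^k := by linarith [cb_sqrt k]
      _ = 2^(2*(k:ℕ)+1) := by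
          rw [show ((2:ℝ))^(2*k+1) = 4^k*2 by rw [pow_succ, pow_mul]; norm_num]
          ring

def Ycnt {m : ℕ} (s : Finset (Fin m)) (w : Fin m → Bool) : ℕ :=
  (s.filter (fun j => w j = true)).card

def Dfun {m : ℕ} (n : ℕ) (s : Finset (Fin m)) (w : Fin m → Bool) : ℤ :=
  (Ycnt (Finset.univ \ s) w : ℤ) - ((n:ℤ)-1) * (Ycnt s w : ℤ)

lemma Ycnt_flip {m : ℕ} (s : Finset (Fin m)) (w : Fin m → Bool) :
    (Ycnt s (fun j => !(w j)) : ℤ) = (s.card : ℤ) - Ycnt s w := by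
  have h : (s.filter (fun j => w j = true)).card
      + (s.filter (fun j => ¬ (w j = true))).card = s.card :=
    Finset.card_filter_add_card_filter_not _
  have e : s.filter (fun j => (!(w j)) = true) = s.filter (fun j => ¬ (w j = true)) := by
    apply Finset.filter_congr; intro j _; simp
  unfold Ycnt
  rw [e]
  omega

lemma Dfun_flip {m : ℕ} (n : ℕ) (s : Finset (Fin m)) (w : Fin m → Bool) :
    Dfun n s (fun j => !(w j)) = ((m:ℤ) - n * s.card) - Dfun n s w := by
  unfold Dfun
  rw [Ycnt_flip, Ycnt_flip]
  have hcard : ((Finset.univ \ s).card : ℤ) = (m:ℤ) - s.card := by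
    rw [Finset.card_sdiff_of_subset (Finset.subset_univ s)]
    have hs := s.card_le_univ
    simp at hs ⊢
    omega
  rw [hcard]
  ring

lemma two_G_mid {m n : ℕ} (s : Finset (Fin m)) (θ : ℤ) :
    2^m ≤ 2 * (Finset.univ.filter (fun w : Fin m → Bool => θ ≤ Dfun n s w)).card
      + (Finset.univ.filter (fun w : Fin m → Bool =>
          ((m:ℤ) - n * s.card) - θ < Dfun n s w ∧ Dfun n s w < θ)).card := by
  classical
  set T : ℤ := (m:ℤ) - n * s.card with hT
  have hcardu : (Finset.univ : Finset (Fin m → Bool)).card = 2^m := by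
    simp [Finset.card_univ]
  have hsplit := Finset.card_filter_add_card_filter_not
    (s := (Finset.univ : Finset (Fin m → Bool))) (fun w => θ ≤ Dfun n s w)
  -- injection via flip
  have hinj : (Finset.univ.filter (fun w : Fin m → Bool => ¬ θ ≤ Dfun n s w)).card
      ≤ (Finset.univ.filter (fun w : Fin m → Bool => T - θ < Dfun n s w)).card := by
    apply Finset.card_le_card_of_injOn (fun w => (fun j => !(w j)))
    · intro w hw
      simp only [Finset.mem_coe, Finset.mem_filter, Finset.mem_univ, true_and, not_le] at hw ⊢
      rw [Dfun_flip]
      omega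
    · intro w _ w' _ h
      funext j
      have := congrFun h j
      simpa using this
  have hsub : (Finset.univ.filter (fun w : Fin m → Bool => T - θ < Dfun n s w)).card
      ≤ (Finset.univ.filter (fun w : Fin m → Bool =>
          T - θ < Dfun n s w ∧ Dfun n s w < θ)).card
        + (Finset.univ.filter (fun w : Fin m → Bool => θ ≤ Dfun n s w)).card := by
    calc (Finset.univ.filter (fun w : Fin m → Bool => T - θ < Dfun n s w)).card
        ≤ ((Finset.univ.filter (fun w : Fin m → Bool =>
            T - θ < Dfun n s w ∧ Dfun n s w < θ))
          ∪ (Finset.univ.filter (fun w : Fin m → Bool => θ ≤ Dfun n s w))).card := by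
          apply Finset.card_le_card
          intro w hw
          simp only [Finset.mem_filter, Finset.mem_union, Finset.mem_univ, true_and] at hw ⊢
          omega
      _ ≤ _ := Finset.card_union_le _ _
  omega

lemma mid_bound {m n : ℕ} (hn : 2 ≤ n) (s : Finset (Fin m)) (lo hi : ℤ) :
    (Finset.univ.filter (fun w : Fin m → Bool =>
        lo < Dfun n s w ∧ Dfun n s w < hi)).card
      ≤ 2^(m - s.card) *
        ((((hi - lo).toNat - 2)/(n-1) + 1) * (s.card.choose (s.card/2))) := by
  classical
  set a := s.card with ha
  set K := (((hi - lo).toNat - 2)/(n-1) + 1) with hK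
  set PP := ((s.powerset ×ˢ (Finset.univ \ s).powerset).filter
      (fun p : Finset (Fin m) × Finset (Fin m) =>
        lo < (p.2.card:ℤ) - ((n:ℤ)-1) * (p.1.card:ℤ) ∧
          (p.2.card:ℤ) - ((n:ℤ)-1) * (p.1.card:ℤ) < hi)) with hPP
  have memPP : ∀ p : Finset (Fin m) × Finset (Fin m), p ∈ PP ↔
      (p.1 ⊆ s ∧ p.2 ⊆ Finset.univ \ s) ∧
        (lo < (p.2.card:ℤ) - ((n:ℤ)-1) * (p.1.card:ℤ) ∧
          (p.2.card:ℤ) - ((n:ℤ)-1) * (p.1.card:ℤ) < hi) := by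
    intro p
    rw [hPP, Finset.mem_filter, Finset.mem_product, Finset.mem_powerset, Finset.mem_powerset]
  -- Step 1 : injection from mid set into PP
  have step1 : (Finset.univ.filter (fun w : Fin m → Bool =>
      lo < Dfun n s w ∧ Dfun n s w < hi)).card ≤ PP.card := by
    apply Finset.card_le_card_of_injOn
      (fun w => (s.filter (fun j => w j = true),
        (Finset.univ \ s).filter (fun j => w j = true)))
    · intro w hw
      simp only [Finset.mem_coe, Finset.mem_filter, Finset.mem_univ, true_and] at hw
      rw [Finset.mem_coe, memPP]
      exact ⟨⟨Finset.filter_subset _ _, Finset.filter_subset _ _⟩, hw⟩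
    · intro w _ w' _ h
      simp only [Prod.mk.injEq] at h
      funext j
      by_cases hj : j ∈ s
      · have := Finset.ext_iff.mp h.1 j
        simp only [Finset.mem_filter, hj, true_and] at this
        cases hwj : w j <;> cases hwj' : w' j <;> simp_all
      · have hj' : j ∈ Finset.univ \ s := Finset.mem_sdiff.mpr ⟨Finset.mem_univ j, hj⟩
        have := Finset.ext_iff.mp h.2 j
        simp only [Finset.mem_filter, hj', true_and] at this
        cases hwj : w j <;> cases hwj' : w' j <;> simp_all
  -- Step 2 : fiberwise count of PP over the second component
  have step2 : PP.card = ∑ t ∈ (Finset.univ \ s).powerset,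
      (PP.filter (fun p => p.2 = t)).card := by
    apply Finset.card_eq_sum_card_fiberwise
    intro p hp
    exact Finset.mem_powerset.mpr ((memPP p).mp hp).1.2
  -- Step 3 : each fiber injects into a filtered powerset of s
  have step3 : ∀ t ∈ (Finset.univ \ s).powerset,
      (PP.filter (fun p => p.2 = t)).card ≤
        (s.powerset.filter (fun u =>
          lo < (t.card:ℤ) - ((n:ℤ)-1) * (u.card:ℤ) ∧
            (t.card:ℤ) - ((n:ℤ)-1) * (u.card:ℤ) < hi)).card := by
    intro t _
    apply Finset.card_le_card_of_injOn Prod.fst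
    · intro p hp
      rw [Finset.mem_coe, Finset.mem_filter] at hp
      obtain ⟨hp1, hp2⟩ := hp
      rw [memPP] at hp1
      rw [Finset.mem_coe, Finset.mem_filter, Finset.mem_powerset]
      refine ⟨hp1.1.1, ?_⟩
      rw [← hp2]
      exact hp1.2
    · intro p hp p' hp' h
      rw [Finset.mem_coe, Finset.mem_filter] at hp hp'
      exact Prod.ext h (hp.2.trans hp'.2.symm)
  -- Step 4 : the filtered powerset has few elements
  have step4 : ∀ t : Finset (Fin m),
      (s.powerset.filter (fun u =>
          lo < (t.card:ℤ) - ((n:ℤ)-1) * (u.card:ℤ) ∧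
            (t.card:ℤ) - ((n:ℤ)-1) * (u.card:ℤ) < hi)).card ≤ K * a.choose (a/2) := by
    intro t
    set Ys := ((Finset.range (a+1)).filter (fun y : ℕ =>
        lo < (t.card:ℤ) - ((n:ℤ)-1) * (y:ℤ) ∧ (t.card:ℤ) - ((n:ℤ)-1) * (y:ℤ) < hi)) with hYs
    set St := (s.powerset.filter (fun u =>
        lo < (t.card:ℤ) - ((n:ℤ)-1) * (u.card:ℤ) ∧
          (t.card:ℤ) - ((n:ℤ)-1) * (u.card:ℤ) < hi)) with hSt
    have memSt : ∀ u, u ∈ St ↔ u ⊆ s ∧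
        (lo < (t.card:ℤ) - ((n:ℤ)-1) * (u.card:ℤ) ∧
          (t.card:ℤ) - ((n:ℤ)-1) * (u.card:ℤ) < hi) := by
      intro u; rw [hSt, Finset.mem_filter, Finset.mem_powerset]
    have memYs : ∀ y : ℕ, y ∈ Ys ↔ y < a + 1 ∧
        (lo < (t.card:ℤ) - ((n:ℤ)-1) * (y:ℤ) ∧ (t.card:ℤ) - ((n:ℤ)-1) * (y:ℤ) < hi) := by
      intro y; rw [hYs, Finset.mem_filter, Finset.mem_range]
    have hfib : St.card = ∑ y ∈ Ys, (St.filter (fun u => u.card = y)).card := by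
      apply Finset.card_eq_sum_card_fiberwise
      intro u hu
      rw [Finset.mem_coe, memSt] at hu
      rw [Finset.mem_coe, memYs]
      have := Finset.card_le_card hu.1
      exact ⟨by omega, hu.2⟩
    have hfibcard : ∀ y : ℕ, (St.filter (fun u => u.card = y)).card ≤ a.choose (a/2) := by
      intro y
      calc (St.filter (fun u => u.card = y)).card
          ≤ (Finset.powersetCard y s).card := by
            apply Finset.card_le_card
            intro u hu
            rw [Finset.mem_filter] at hu
            exact Finset.mem_powersetCard.mpr ⟨((memSt u).mp hu.1).1, hu.2⟩
        _ = a.choose y := Finset.card_powersetCard y s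
        _ ≤ a.choose (a/2) := Nat.choose_le_middle y a
    have hYscard : Ys.card ≤ K := by
      rcases Finset.eq_empty_or_nonempty Ys with h | h
      · simp [h, hK]
      · set y₀ := Ys.min' h with hy₀
        have hy₀mem := Ys.min'_mem h
        rw [memYs] at hy₀mem
        have hge2 : 2 ≤ hi - lo := by omega
        set L2 : ℕ := (hi - lo - 2).toNat with hL2
        have hL2' : (L2:ℤ) = hi - lo - 2 := by omega
        have hKeq : K = L2/(n-1) + 1 := by rw [hK]; congr 1; congr 1; omega
        rw [hKeq]
        obtain ⟨d, hgen⟩ : ∃ d, L2/(n-1) = d := ⟨_, rfl⟩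
        rw [hgen]
        have hsub : Ys ⊆ Finset.Icc y₀ (y₀ + d) := by
          intro y hy
          have hy0le : y₀ ≤ y := Ys.min'_le y hy
          rw [memYs] at hy
          rw [Finset.mem_Icc]
          refine ⟨hy0le, ?_⟩
          have hn2 : (2:ℤ) ≤ (n:ℤ) := by exact_mod_cast hn
          have h3 : ((n:ℤ)-1) * ((y:ℤ) - (y₀:ℤ)) ≤ hi - lo - 2 := by
            nlinarith [hy.2.1, hy.2.2, hy₀mem.2.1, hy₀mem.2.2]
          have hz : (((y - y₀) * (n - 1) : ℕ) : ℤ) = ((n:ℤ) - 1) * ((y:ℤ) - (y₀:ℤ)) := by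
            have h1 : y₀ ≤ y := hy0le
            have h2 : 1 ≤ n := by omega
            push_cast [h1, h2]
            ring
          have hmul : (y - y₀) * (n - 1) ≤ L2 := by omega
          have hdle : y - y₀ ≤ d := by
            rw [← hgen]
            exact (Nat.le_div_iff_mul_le (by omega : 0 < n - 1)).mpr hmul
          omega
        calc Ys.card ≤ (Finset.Icc y₀ (y₀ + d)).card := Finset.card_le_card hsub
          _ = d + 1 := by rw [Nat.card_Icc]; omega
    calc St.card = ∑ y ∈ Ys, (St.filter (fun u => u.card = y)).card := hfib
      _ ≤ ∑ _y ∈ Ys, a.choose (a/2) := Finset.sum_le_sum (fun y _ => hfibcard y)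
      _ = Ys.card * a.choose (a/2) := by rw [Finset.sum_const, smul_eq_mul]
      _ ≤ K * a.choose (a/2) := Nat.mul_le_mul_right _ hYscard
  -- combine
  have hpow : ((Finset.univ \ s).powerset).card = 2^(m - a) := by
    rw [Finset.card_powerset, Finset.card_sdiff_of_subset (Finset.subset_univ s)]
    simp [ha]
  calc (Finset.univ.filter (fun w : Fin m → Bool =>
        lo < Dfun n s w ∧ Dfun n s w < hi)).card
      ≤ PP.card := step1
    _ = ∑ t ∈ (Finset.univ \ s).powerset, (PP.filter (fun p => p.2 = t)).card := step2
    _ ≤ ∑ t ∈ (Finset.univ \ s).powerset, K * a.choose (a/2) := by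
        apply Finset.sum_le_sum
        intro t ht
        exact (step3 t ht).trans (step4 t)
    _ = 2^(m-a) * (K * a.choose (a/2)) := by
        rw [Finset.sum_const, smul_eq_mul, hpow]



lemma not_prop_of {n m : ℕ} (c : ℕ) (hn : 2 ≤ n) (A : Fin n → Finset (Fin m)) (i : Fin n)
    (v : Fin n → Fin m → Bool)
    (hD : ((n:ℤ) * c + 1) ≤ Dfun n (A i) (v i)) :
    ¬ PROPagent c (fun i' => binUtil (v i')) A i := by
  rintro ⟨S, hS, hcard, hge⟩
  set w := v i with hw
  set Y := Ycnt (A i) w with hY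
  set X := Ycnt (Finset.univ \ A i) w with hX
  have hsplit : (Finset.univ.filter (fun j => w j = true)).card = Y + X := by
    have hu : (A i) ∪ (Finset.univ \ A i) = Finset.univ :=
      Finset.union_sdiff_of_subset (Finset.subset_univ _)
    rw [← hu, Finset.filter_union]
    rw [Finset.card_union_of_disjoint]
    · rfl
    · exact Finset.disjoint_filter_filter Finset.disjoint_sdiff
  have hA : binUtil w (A i) = (Y:ℝ) := rfl
  have huniv : binUtil w Finset.univ = (Y:ℝ) + X := by
    unfold binUtil
    rw [hsplit]; push_cast; ring
  have hSle : binUtil w S ≤ (c:ℝ) := by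
    unfold binUtil
    have h1 : (S.filter (fun j => w j = true)).card ≤ S.card := Finset.card_filter_le _ _
    have := h1.trans hcard
    exact_mod_cast this
  have hDR : ((n:ℝ) - 1) * Y + (n:ℝ)*c + 1 ≤ (X:ℝ) := by
    have : ((n:ℤ)*c + 1) ≤ (X:ℤ) - ((n:ℤ)-1) * (Y:ℤ) := hD
    have h2 : ((n:ℤ)-1) * Y + n*c + 1 ≤ (X:ℤ) := by linarith
    exact_mod_cast h2
  change binUtil w (A i) ≥ binUtil w Finset.univ / (n:ℝ) - binUtil w S at hge
  simp only [hA, huniv] at hge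
  have hn0 : (0:ℝ) < n := by positivity
  have hge' : ((Y:ℝ) + X) / n ≤ (Y:ℝ) + binUtil w S := by linarith
  rw [div_le_iff₀ hn0] at hge'
  have hnc : (n:ℝ) * binUtil w S ≤ (n:ℝ) * c :=
    mul_le_mul_of_nonneg_left hSle (le_of_lt hn0)
  have hBnn : (0:ℝ) ≤ binUtil w S := by unfold binUtil; positivity
  nlinarith

lemma ncard_lift {n m : ℕ} (hn : 1 ≤ n) (i : Fin n) (P : (Fin m → Bool) → Prop)
    [DecidablePred P] :
    Set.ncard {v : Fin n → Fin m → Bool | P (v i)} =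
      (Finset.univ.filter (fun w => P w)).card * (2^m)^(n-1) := by
  classical
  have e : {v : Fin n → Fin m → Bool // P (v i)} ≃
      {w : Fin m → Bool // P w} × ({j : Fin n // j ≠ i} → (Fin m → Bool)) :=
    { toFun := fun v => (⟨v.1 i, v.2⟩, fun j => v.1 j.1)
      invFun := fun p => ⟨fun j => if h : j = i then p.1.1 else p.2 ⟨j, h⟩, by
        simp only [dif_pos rfl]; exact p.1.2⟩
      left_inv := fun v => by
        apply Subtype.ext
        funext j
        by_cases h : j = i
        · subst h; simp
        · simp [h]
      right_inv := fun p => by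
        refine Prod.ext (Subtype.ext ?_) (funext fun j => ?_)
        · simp
        · simp [j.2] }
  have h1 : Set.ncard {v : Fin n → Fin m → Bool | P (v i)}
      = Nat.card {v : Fin n → Fin m → Bool // P (v i)} := rfl
  rw [h1, Nat.card_congr e, Nat.card_prod, Nat.card_eq_fintype_card,
    Nat.card_eq_fintype_card, Fintype.card_subtype]
  congr 1
  rw [Fintype.card_fun]
  congr 1
  · simp [Fintype.card_fun]
  · rw [Fintype.card_subtype_compl]
    simp [Fintype.card_subtype_eq]

set_option maxHeartbeats 1000000 in
/-- If `|A_i| ≤ m/n`, then for a uniformly random binary additive profile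
(i.e. i.i.d. Bernoulli(1/2) values), the allocation fails to be PROPc for agent `i`
with probability at least 1/8, where `c = ⌊0.01·√(m/n)⌋`. -/
theorem prop_lb_aux (n m : ℕ) (hn : 2 ≤ n) (hm : 100 * n ≤ m)
    (A : Fin n → Finset (Fin m)) (hA : IsPartition A)
    (i : Fin n) (hsize : ((A i).card : ℝ) ≤ (m : ℝ) / n) :
    (1 : ℝ) / 8 ≤
      (Set.ncard {v : Fin n → Fin m → Bool |
          ¬ PROPagent (⌊(0.01 : ℝ) * Real.sqrt ((m : ℝ) / n)⌋₊)
              (fun i' => binUtil (v i')) A i} : ℝ) / 2 ^ (n * m) := by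
  classical
  set c : ℕ := ⌊(0.01 : ℝ) * Real.sqrt ((m : ℝ) / n)⌋₊ with hc
  set s : Finset (Fin m) := A i with hs
  have hn0 : (0:ℝ) < n := by positivity
  have hn2 : (2:ℝ) ≤ n := by exact_mod_cast hn
  have hna : n * s.card ≤ m := by
    have h1 : (s.card : ℝ) * n ≤ m := (le_div_iff₀ hn0).mp hsize
    have h2 : ((n * s.card : ℕ) : ℝ) ≤ (m : ℝ) := by push_cast; linarith
    exact_mod_cast h2
  set θ : ℤ := ((n*c : ℕ) : ℤ) + 1 with hθ
  have hGM := two_G_mid (n := n) s θ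
  set G := (Finset.univ.filter (fun w : Fin m → Bool => θ ≤ Dfun n s w)).card with hG
  set Mi := (Finset.univ.filter (fun w : Fin m → Bool =>
      ((m:ℤ) - n * s.card) - θ < Dfun n s w ∧ Dfun n s w < θ)).card with hMi
  -- real bound on the middle count
  have hT0 : (0:ℤ) ≤ (m:ℤ) - n * s.card := by
    have : ((n * s.card : ℕ) : ℤ) ≤ (m:ℤ) := by exact_mod_cast hna
    push_cast at this
    omega
  have hMiR : (Mi:ℝ) ≤ 3/4 * 2^m := by
    rcases le_or_gt (2*θ) ((m:ℤ) - n * s.card) with hcase | hcase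
    · -- middle interval empty
      have hempty : (Finset.univ.filter (fun w : Fin m → Bool =>
          ((m:ℤ) - n * s.card) - θ < Dfun n s w ∧ Dfun n s w < θ)) = ∅ := by
        apply Finset.filter_false_of_mem
        rintro w - ⟨h1, h2⟩
        omega
      rw [hMi, hempty]
      simp only [Finset.card_empty, Nat.cast_zero]
      positivity
    · -- main analytic case
      have hmid := mid_bound (n := n) hn s (((m:ℤ) - n * s.card) - θ) θ
      rw [← hMi] at hmid
      -- bound K
      have hLle : (θ - (((m:ℤ) - ↑n * ↑s.card) - θ)).toNat ≤ 2*(n*c) + 2 := by omega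
      have hK4 : ((θ - (((m:ℤ) - ↑n * ↑s.card) - θ)).toNat - 2)/(n-1) + 1 ≤ 4*c + 1 := by
        have h1 : (θ - (((m:ℤ) - ↑n * ↑s.card) - θ)).toNat - 2 ≤ 2*(n*c) := by omega
        have h2 : 2*(n*c) ≤ 4*c*(n-1) := by
          have h3 : 2*n ≤ 4*(n-1) := by omega
          calc 2*(n*c) = (2*n)*c := by ring
            _ ≤ (4*(n-1))*c := Nat.mul_le_mul_right c h3
            _ = 4*c*(n-1) := by ring
        have h4 : 4*c*(n-1)/(n-1) = 4*c := by
          rw [Nat.mul_div_assoc _ (dvd_refl _), Nat.div_self (by omega : 0 < n-1), mul_one]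
        have h5 := Nat.div_le_div_right (c := n-1) (h1.trans h2)
        exact Nat.add_le_add_right (h5.trans (le_of_eq h4)) 1
      -- real-number facts
      set t : ℝ := Real.sqrt ((m:ℝ)/n) with htdef
      have htnn : 0 ≤ t := Real.sqrt_nonneg _
      have htsq : t^2 = (m:ℝ)/n := Real.sq_sqrt (by positivity)
      have hr : (100:ℝ) ≤ (m:ℝ)/n := by
        rw [le_div_iff₀ hn0]
        exact_mod_cast hm
      have ht10 : (10:ℝ) ≤ t := by nlinarith
      have hcle : (c:ℝ) ≤ 0.01 * t := Nat.floor_le (by positivity)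
      have hmn : (m:ℝ) = n * t^2 := by rw [htsq]; field_simp
      -- lower bound on a = s.card
      have hmub : (m:ℝ) ≤ (n:ℝ) * s.card + 2*((n:ℝ)*c) + 1 := by
        have h1 : (m:ℤ) - ↑n * ↑s.card ≤ 2*((n*c : ℕ):ℤ) + 1 := by omega
        have h2 : ((m:ℤ):ℝ) - ((n:ℤ):ℝ) * ((s.card:ℤ):ℝ) ≤ 2*(((n*c:ℕ):ℤ):ℝ) + 1 := by
          exact_mod_cast h1
        push_cast at h2
        linarith
      have h5 : (n:ℝ) * (t^2 - s.card - 2*c) ≤ 1 := by nlinarith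
      have h6 : t^2 - s.card - 2*c ≤ 1 := by
        have h7 : t^2 - (s.card:ℝ) - 2*c ≤ 1/(n:ℝ) := (le_div_iff₀ hn0).mpr (by linarith)
        have h8 : 1/(n:ℝ) ≤ 1 := by
          rw [div_le_one hn0]; linarith
        linarith
      have hage : t^2 - 0.02*t - 1 ≤ (s.card:ℝ) := by nlinarith
      have hapos : (0:ℝ) < (s.card:ℝ) := by nlinarith [sq_nonneg (t-10)]
      have ha1 : 0 < s.card := by
        by_contra h
        push_neg at h
        have h0 : s.card = 0 := by omega
        rw [h0] at hapos
        norm_num at hapos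
      -- the key real inequality
      set u : ℝ := Real.sqrt (s.card) with hudef
      have hunn : 0 ≤ u := Real.sqrt_nonneg _
      have husq : u^2 = (s.card:ℝ) := Real.sq_sqrt (Nat.cast_nonneg _)
      have hupos : 0 < u := Real.sqrt_pos.mpr hapos
      have h4c : (4*(c:ℝ) + 1) ≤ 3/4 * u := by
        apply sq_le_imp (by positivity) (by linarith)
        have hpoly : (0.04*t + 1)^2 ≤ (9/16) * (t^2 - 0.02*t - 1) := by
          nlinarith [sq_nonneg (t-10)]
        calc (4*(c:ℝ)+1)^2 ≤ (0.04*t + 1)^2 := by nlinarith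
          _ ≤ (9/16) * (t^2 - 0.02*t - 1) := hpoly
          _ ≤ (9/16) * u^2 := by rw [husq]; nlinarith
          _ = (3/4*u)^2 := by ring
      have hchs := choose_half_sqrt s.card
      rw [← hudef] at hchs
      have hCnn : (0:ℝ) ≤ (s.card.choose (s.card/2) : ℝ) := by positivity
      have hkey : ((4*c+1 : ℕ):ℝ) * (s.card.choose (s.card/2) : ℝ) ≤ 3/4 * 2^(s.card) := by
        push_cast
        calc (4*(c:ℝ)+1) * (s.card.choose (s.card/2) : ℝ)
            ≤ (3/4 * u) * (s.card.choose (s.card/2) : ℝ) := by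
              apply mul_le_mul_of_nonneg_right h4c hCnn
          _ = 3/4 * ((s.card.choose (s.card/2) : ℝ) * u) := by ring
          _ ≤ 3/4 * 2^(s.card) := by nlinarith
      -- conclude
      have ham : s.card ≤ m := (Nat.le_mul_of_pos_left s.card (by omega : 0 < n)).trans hna
      have hmid2 : Mi ≤ 2^(m - s.card) * ((4*c+1) * s.card.choose (s.card/2)) :=
        hmid.trans (Nat.mul_le_mul_left _ (Nat.mul_le_mul_right _ hK4))
      have hmidR : (Mi:ℝ) ≤ (2:ℝ)^(m - s.card) * (((4*c+1 : ℕ):ℝ) * (s.card.choose (s.card/2) : ℝ)) := by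
        exact_mod_cast hmid2
      calc (Mi:ℝ) ≤ (2:ℝ)^(m - s.card) * (((4*c+1 : ℕ):ℝ) * (s.card.choose (s.card/2) : ℝ)) := hmidR
        _ ≤ (2:ℝ)^(m - s.card) * (3/4 * 2^(s.card)) := by
            apply mul_le_mul_of_nonneg_left hkey (by positivity)
        _ = 3/4 * 2^m := by
            rw [show (2:ℝ)^(m - s.card) * (3/4 * 2^(s.card)) = 3/4 * ((2:ℝ)^(m-s.card) * 2^(s.card)) from by ring,
              ← pow_add]
            congr 2
            omega
  -- from counting to the final bound
  have hG8 : (2:ℝ)^m ≤ 8 * G := by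
    have hGMR : (2:ℝ)^m ≤ 2*G + Mi := by exact_mod_cast hGM
    linarith
  -- lift to profiles
  have hlift := ncard_lift (n := n) (m := m) (by omega) i (fun w => θ ≤ Dfun n s w)
  have hsubset : {v : Fin n → Fin m → Bool | θ ≤ Dfun n s (v i)} ⊆
      {v : Fin n → Fin m → Bool |
        ¬ PROPagent c (fun i' => binUtil (v i')) A i} := by
    intro v hv
    simp only [Set.mem_setOf_eq] at hv ⊢
    apply not_prop_of c hn A i v
    rw [← hs]
    have : θ = (n:ℤ) * c + 1 := by rw [hθ]; push_cast; ring
    rw [← this]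
    exact hv
  have hmono := Set.ncard_le_ncard hsubset (Set.toFinite _)
  rw [hlift] at hmono
  have h2pos : (0:ℝ) < 2^(n*m) := by positivity
  rw [le_div_iff₀ h2pos, div_mul_eq_mul_div, div_le_iff₀ (by norm_num : (0:ℝ) < 8)]
  have hexp : m + m * (n - 1) = n * m := by
    have h1 : n - 1 + 1 = n := Nat.succ_pred_eq_of_pos (lt_of_lt_of_le (by norm_num) hn)
    calc m + m * (n-1) = m * ((n-1)+1) := by ring
      _ = n * m := by rw [h1, Nat.mul_comm]
  have hsplitpow : (2:ℝ)^(n*m) = 2^m * ((2:ℝ)^m)^(n-1) := by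
    rw [← pow_mul, ← pow_add, hexp]
  have hmonoR : (G:ℝ) * ((2:ℝ)^m)^(n-1) ≤
      (Set.ncard {v : Fin n → Fin m → Bool |
        ¬ PROPagent c (fun i' => binUtil (v i')) A i} : ℝ) := by
    exact_mod_cast hmono
  have hPpos : (0:ℝ) < ((2:ℝ)^m)^(n-1) := by positivity
  calc (1:ℝ) * 2^(n*m) = 2^m * ((2:ℝ)^m)^(n-1) := by rw [one_mul, hsplitpow]
    _ ≤ (8*G) * ((2:ℝ)^m)^(n-1) := mul_le_mul_of_nonneg_right (by linarith) (le_of_lt hPpos)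
    _ = (G * ((2:ℝ)^m)^(n-1)) * 8 := by ring
    _ ≤ _ := mul_le_mul_of_nonneg_right hmonoR (by norm_num)
end

section
/- Let u = (u_1,…,u_n) be a profile of monotone utility functions over the item set M = {1,…,m}, and let k, d be non-negative integers. If an allocation A is EFd with respect to the profile u^{−k} = (u_1^{−k},…,u_n^{−k}), then A is EF(d+k) with respect to u. -/
def EF {n m : ℕ} (c : ℕ) (u : Fin n → Finset (Fin m) → ℝ)
    (A : Fin n → Finset (Fin m)) : Prop :=
  ∀ i i' : Fin n, ∃ S ⊆ A i', S.card ≤ c ∧ u i (A i) ≥ u i (A i' \ S)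

/-- `u^{-k}(S) = min over T ⊆ M, |T| ≤ k of u(S \ T)`. -/
noncomputable def kRemoved {m : ℕ} (u : Finset (Fin m) → ℝ) (k : ℕ)
    (S : Finset (Fin m)) : ℝ :=
  ((Finset.univ : Finset (Fin m)).powerset.filter fun T => T.card ≤ k).inf'
    ⟨∅, by simp⟩ fun T => u (S \ T)

/-!
Taking `T = ∅` in the minimum gives `u^{-k}(A_i) ≤ u(A_i)`, and
`u^{-k}(A_{i'} \ S)` is attained as `u((A_{i'} \ S) \ T)` for some `|T| ≤ k`. Hence
removing the at most `d + k` items of `(S ∪ T) ∩ A_{i'}` from `A_{i'}` already kills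
agent `i`'s envy.
-/

namespace kRemoved

variable {m : ℕ} (u : Finset (Fin m) → ℝ) (k : ℕ) (S : Finset (Fin m))

theorem le_self : kRemoved u k S ≤ u S :=
  (Finset.inf'_le (fun T => u (S \ T)) (b := ∅) (by simp)).trans_eq (by rw [Finset.sdiff_empty])

theorem exists_card_le_eq : ∃ T : Finset (Fin m), T.card ≤ k ∧ kRemoved u k S = u (S \ T) := by
  obtain ⟨T, hT, hmin⟩ := Finset.exists_mem_eq_inf' (f := fun T => u (S \ T))
    (⟨∅, by simp⟩ : ((Finset.univ : Finset (Fin m)).powerset.filter fun T => T.card ≤ k).Nonempty)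
  exact ⟨T, (Finset.mem_filter.mp hT).2, hmin⟩

end kRemoved

theorem EF_kRemoved_to_EF_general (n m : ℕ) (u : Fin n → Finset (Fin m) → ℝ)
    (k d : ℕ) (A : Fin n → Finset (Fin m))
    (h : EF d (fun i => kRemoved (u i) k) A) :
    EF (d + k) u A := by
  intro i i'
  obtain ⟨S, -, hS, henvy⟩ := h i i'
  obtain ⟨T, hT, hmin⟩ := kRemoved.exists_card_le_eq (u i) k (A i' \ S)
  refine ⟨(S ∪ T) ∩ A i', Finset.inter_subset_right, ?_, ?_⟩
  · calc ((S ∪ T) ∩ A i').card ≤ (S ∪ T).card := Finset.card_le_card Finset.inter_subset_left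
      _ ≤ S.card + T.card := Finset.card_union_le S T
      _ ≤ d + k := Nat.add_le_add hS hT
  · calc u i (A i' \ ((S ∪ T) ∩ A i')) = u i ((A i' \ S) \ T) := by
          rw [Finset.sdiff_inter_self_right, sdiff_sdiff_left]; rfl
      _ = kRemoved (u i) k (A i' \ S) := hmin.symm
      _ ≤ kRemoved (u i) k (A i) := henvy
      _ ≤ u i (A i) := kRemoved.le_self (u i) k (A i)

theorem EF_kRemoved_to_EF (n m : ℕ) (u : Fin n → Finset (Fin m) → ℝ)
    (hu : ∀ i : Fin n, (∀ S : Finset (Fin m), 0 ≤ u i S) ∧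
      ∀ S T : Finset (Fin m), S ⊆ T → u i S ≤ u i T)
    (k d : ℕ) (A : Fin n → Finset (Fin m)) (hA : IsPartition A)
    (h : EF d (fun i => kRemoved (u i) k) A) :
    EF (d + k) u A :=
  EF_kRemoved_to_EF_general n m u k d A h
end

section
/- Let k ≥ 1 be an integer and d a non-negative integer, and let u = (u_1,…,u_n) and ũ = (ũ_1,…,ũ_n) be two (agent × item)-level adjacent profiles of monotone utility functions over the item set M = {1,…,m}. If an allocation A is EFd with respect to u^{−k}, then A is EF(d+2) with respect to ũ^{−(k−1)}. -/
def MonotoneProfile {n m : ℕ} (u : Fin n → Finset (Fin m) → ℝ) : Prop :=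
  ∀ i : Fin n, (∀ S : Finset (Fin m), 0 ≤ u i S) ∧
    ∀ S T : Finset (Fin m), S ⊆ T → u i S ≤ u i T

def ItemAdjFn {n m : ℕ} (u u' : Fin n → Finset (Fin m) → ℝ) : Prop :=
  ∃ (iStar : Fin n) (jStar : Fin m),
    (∀ i : Fin n, i ≠ iStar → u i = u' i) ∧
    ∀ S : Finset (Fin m), jStar ∉ S → u iStar S = u' iStar S


/-!
Write `u^{-k}` for `kRemoved u k`. Removing `k + 1` items is the same as removing a set `J` of at
most one item and then `k` more, so `u^{-(k+1)}(X) ≥ u^{-k}(X \ J)` for the right `J`, and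
`u^{-(k+1)}(X) ≤ u^{-k}(X \ {j})` for every `j`. On bundles avoiding the item `j*` where the two
profiles differ, `u^{-k}` and `ũ^{-k}` coincide. Hence, if agent `i` does not envy `A i'` after
removing `S` under `u^{-(k+1)}`, then
`ũ^{-k}(A i' \ (S ∪ J ∪ {j*})) = u^{-k}(A i' \ (S ∪ J ∪ {j*})) ≤ u^{-(k+1)}(A i' \ S)
  ≤ u^{-(k+1)}(A i) ≤ u^{-k}(A i \ {j*}) = ũ^{-k}(A i \ {j*}) ≤ ũ^{-k}(A i)`.
-/

section kRemoved

variable {m : ℕ} {u v : Finset (Fin m) → ℝ} {k : ℕ} {X : Finset (Fin m)}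

lemma kRemoved_le (u : Finset (Fin m) → ℝ) (k : ℕ) (X : Finset (Fin m)) {T : Finset (Fin m)}
    (hT : T.card ≤ k) : kRemoved u k X ≤ u (X \ T) :=
  Finset.inf'_le _ (by simp [hT])

lemma le_kRemoved {x : ℝ} (h : ∀ T : Finset (Fin m), T.card ≤ k → x ≤ u (X \ T)) :
    x ≤ kRemoved u k X :=
  Finset.le_inf' _ _ fun T hT => h T (Finset.mem_filter.1 hT).2

lemma exists_kRemoved_eq (u : Finset (Fin m) → ℝ) (k : ℕ) (X : Finset (Fin m)) :
    ∃ T : Finset (Fin m), T.card ≤ k ∧ kRemoved u k X = u (X \ T) := by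
  obtain ⟨T, hT, h⟩ := Finset.exists_mem_eq_inf' _ (fun T => u (X \ T))
  exact ⟨T, (Finset.mem_filter.1 hT).2, h⟩

lemma kRemoved_congr (h : ∀ T ⊆ X, u T = v T) : kRemoved u k X = kRemoved v k X :=
  Finset.inf'_congr _ rfl fun _ _ => h _ Finset.sdiff_subset

lemma kRemoved_eq_of_notMem {j : Fin m} (h : ∀ S, j ∉ S → u S = v S) (hX : j ∉ X) :
    kRemoved u k X = kRemoved v k X :=
  kRemoved_congr fun _ hT => h _ fun hj => hX (hT hj)

lemma kRemoved_monotone (hu : Monotone u) (k : ℕ) : Monotone (kRemoved u k) :=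
  fun X _ hXY => le_kRemoved fun _ hT =>
    (kRemoved_le u k X hT).trans (hu (Finset.sdiff_subset_sdiff hXY le_rfl))

lemma kRemoved_add_le_kRemoved_sdiff {a : ℕ} {J : Finset (Fin m)} (hJ : J.card ≤ a) :
    kRemoved u (k + a) X ≤ kRemoved u k (X \ J) :=
  le_kRemoved fun T hT => by
    rw [sdiff_sdiff_left]
    exact kRemoved_le u _ X ((Finset.card_union_le J T).trans (by omega))

lemma exists_kRemoved_sdiff_le_kRemoved_add (u : Finset (Fin m) → ℝ) (k a : ℕ)
    (X : Finset (Fin m)) :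
    ∃ J : Finset (Fin m), J.card ≤ a ∧ kRemoved u k (X \ J) ≤ kRemoved u (k + a) X := by
  obtain ⟨T, hT, hXT⟩ := exists_kRemoved_eq u (k + a) X
  obtain ⟨J, hJT, hJ⟩ := Finset.exists_subset_card_eq (min_le_right a T.card)
  refine ⟨J, hJ ▸ min_le_left _ _, ?_⟩
  have hcard : (T \ J).card ≤ k := by
    rw [Finset.card_sdiff_of_subset hJT, hJ]
    omega
  calc kRemoved u k (X \ J) ≤ u ((X \ J) \ (T \ J)) := kRemoved_le u k _ hcard
    _ = kRemoved u (k + a) X := by rw [sdiff_sdiff_sdiff_cancel_right hJT, hXT]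

end kRemoved

lemma MonotoneProfile.monotone {n m : ℕ} {u : Fin n → Finset (Fin m) → ℝ}
    (hu : MonotoneProfile u) (i : Fin n) : Monotone (u i) :=
  (hu i).2

lemma ItemAdjFn.exists_eq_of_notMem {n m : ℕ} {u u' : Fin n → Finset (Fin m) → ℝ}
    (h : ItemAdjFn u u') : ∃ j : Fin m, ∀ i S, j ∉ S → u i S = u' i S := by
  obtain ⟨iStar, jStar, hne, heq⟩ := h
  refine ⟨jStar, fun i S hS => ?_⟩
  by_cases hi : i = iStar
  · exact hi ▸ heq S hS
  · rw [hne i hi]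

lemma EF.of_sdiff_le {n m : ℕ} {c : ℕ} {u : Fin n → Finset (Fin m) → ℝ}
    {A : Fin n → Finset (Fin m)}
    (h : ∀ i i', ∃ R : Finset (Fin m), R.card ≤ c ∧ u i (A i' \ R) ≤ u i (A i)) : EF c u A := by
  intro i i'
  obtain ⟨R, hR, hle⟩ := h i i'
  refine ⟨R ∩ A i', Finset.inter_subset_right,
    (Finset.card_le_card Finset.inter_subset_left).trans hR, ?_⟩
  rwa [Finset.sdiff_inter_self_right]

theorem EF_stable_under_adjacency_general (n m : ℕ) (k : ℕ) (hk : 1 ≤ k) (d : ℕ)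
    (u utilde : Fin n → Finset (Fin m) → ℝ)
    (hu : MonotoneProfile u) (hut : MonotoneProfile utilde)
    (hadj : ItemAdjFn u utilde)
    (A : Fin n → Finset (Fin m))
    (h : EF d (fun i => kRemoved (u i) k) A) :
    EF (d + 2) (fun i => kRemoved (utilde i) (k - 1)) A := by
  obtain ⟨k, rfl⟩ := Nat.exists_eq_add_of_le' hk
  obtain ⟨jStar, hagree⟩ := hadj.exists_eq_of_notMem
  refine EF.of_sdiff_le fun i i' => ?_
  obtain ⟨S, -, hS, hSle⟩ := h i i'
  obtain ⟨J, hJ, hJle⟩ := exists_kRemoved_sdiff_le_kRemoved_add (u i) k 1 (A i' \ S)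
  refine ⟨S ∪ J ∪ {jStar}, ?_, ?_⟩
  · grw [Finset.card_union_le, Finset.card_union_le, hS, hJ, Finset.card_singleton]
  · rw [Nat.add_sub_cancel]
    calc kRemoved (utilde i) k (A i' \ (S ∪ J ∪ {jStar}))
        = kRemoved (u i) k (A i' \ (S ∪ J ∪ {jStar})) :=
          (kRemoved_eq_of_notMem (hagree i) (by simp)).symm
      _ ≤ kRemoved (u i) k ((A i' \ S) \ J) := by
          refine kRemoved_monotone (hu.monotone i) k ?_
          rw [sdiff_sdiff_left]
          exact sdiff_le_sdiff_left le_sup_left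
      _ ≤ kRemoved (u i) (k + 1) (A i) := hJle.trans hSle
      _ ≤ kRemoved (u i) k (A i \ {jStar}) :=
          kRemoved_add_le_kRemoved_sdiff (Finset.card_singleton jStar).le
      _ = kRemoved (utilde i) k (A i \ {jStar}) := kRemoved_eq_of_notMem (hagree i) (by simp)
      _ ≤ kRemoved (utilde i) k (A i) :=
          kRemoved_monotone (hut.monotone i) k Finset.sdiff_subset

theorem EF_stable_under_adjacency (n m : ℕ) (k : ℕ) (hk : 1 ≤ k) (d : ℕ)
    (u utilde : Fin n → Finset (Fin m) → ℝ)
    (hu : MonotoneProfile u) (hut : MonotoneProfile utilde)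
    (hadj : ItemAdjFn u utilde)
    (A : Fin n → Finset (Fin m)) (hA : IsPartition A)
    (h : EF d (fun i => kRemoved (u i) k) A) :
    EF (d + 2) (fun i => kRemoved (utilde i) (k - 1)) A :=
  EF_stable_under_adjacency_general n m k hk d u utilde hu hut hadj A h
end

section
/- There exists a constant ζ > 0 (one may take ζ = 0.01) such that for every ε ∈ (0,1] and all positive integers n ≥ 3 and m, the following holds with c = ⌊ζ·min{(log m)/ε, m/n, √m}⌋: for every (agent × item)-level ε-differentially private randomized algorithm M mapping profiles of binary additive utility functions (for n agents and m items) to probability distributions over allocations, there exists a profile u of binary additive utility functions such that the probability that M(u) outputs a connected allocation that is EFc with respect to u is less than 0.5. -/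
open scoped ENNReal

def ConnAlloc {n m : ℕ} (A : Fin n → Finset (Fin m)) : Prop :=
  ∀ i : Fin n, ∀ a b c : Fin m, a ∈ A i → c ∈ A i → a ≤ b → b ≤ c → b ∈ A i

/-- (Agent × item)-level adjacency for binary additive profiles. -/
def ItemAdj {n m : ℕ} (v v' : Fin n → Fin m → Bool) : Prop :=
  ∃ (iStar : Fin n) (jStar : Fin m),
    (∀ i : Fin n, i ≠ iStar → v i = v' i) ∧
    ∀ j : Fin m, j ≠ jStar → v iStar j = v' iStar j

lemma card_filter_interval {m : ℕ} (a k : ℕ) (h : a + k ≤ m) :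
    (Finset.univ.filter (fun j : Fin m => a ≤ j.val ∧ j.val < a + k)).card = k := by
  have h1 : (Finset.univ.filter (fun j : Fin m => a ≤ j.val ∧ j.val < a + k)).card
      = (Finset.Ico a (a+k)).card := by
    apply Finset.card_bij (fun j _ => j.val)
    · intro j hj; simp only [Finset.mem_filter] at hj; simp only [Finset.mem_Ico]; omega
    · intro j1 _ j2 _ hv; exact Fin.ext hv
    · intro x hx
      simp only [Finset.mem_Ico] at hx
      exact ⟨⟨x, by omega⟩, by simp; omega, rfl⟩
  rw [h1, Nat.card_Ico]; omega

lemma sum_inter_card {n m : ℕ} {A : Fin n → Finset (Fin m)} (hA : IsPartition A)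
    (B : Finset (Fin m)) :
    ∑ i, (A i ∩ B).card = B.card := by
  classical
  rw [← Finset.card_biUnion]
  · congr 1
    ext j
    simp only [Finset.mem_biUnion, Finset.mem_inter, Finset.mem_univ, true_and]
    constructor
    · rintro ⟨i, _, hj⟩; exact hj
    · intro hj
      have hj2 : j ∈ Finset.univ.biUnion A := by rw [hA.2]; simp
      rcases Finset.mem_biUnion.mp hj2 with ⟨i, _, hji⟩
      exact ⟨i, hji, hj⟩
  · intro i _ j _ hij
    exact (hA.1 i j hij).mono Finset.inter_subset_left Finset.inter_subset_left

lemma ef_extract {m : ℕ} {v : Fin m → Bool} {X Y S : Finset (Fin m)} {c : ℕ}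
    (hcard : S.card ≤ c)
    (hval : c + 1 ≤ (Y.filter (fun j => v j = true)).card)
    (hineq : binUtil v X ≥ binUtil v (Y \ S)) : ∃ x ∈ X, v x = true := by
  classical
  have hsub : (Y.filter (fun j => v j = true)) \ S ⊆ (Y \ S).filter (fun j => v j = true) := by
    intro x hx
    simp only [Finset.mem_sdiff, Finset.mem_filter] at hx ⊢
    tauto
  have h1 : 1 ≤ ((Y \ S).filter (fun j => v j = true)).card := by
    have h2 := Finset.card_le_card hsub
    have h3 := Finset.le_card_sdiff S (Y.filter (fun j => v j = true))
    omega
  have h4 : (1:ℝ) ≤ binUtil v X := by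
    have hb : (1:ℝ) ≤ binUtil v (Y \ S) := by
      unfold binUtil; exact_mod_cast h1
    linarith
  have h5 : 1 ≤ (X.filter (fun j => v j = true)).card := by
    unfold binUtil at h4; exact_mod_cast h4
  obtain ⟨x, hx⟩ := Finset.card_pos.mp (lt_of_lt_of_le one_pos h5)
  exact ⟨x, (Finset.mem_filter.mp hx).1, (Finset.mem_filter.mp hx).2⟩

lemma dp_one_agent {n m : ℕ} {ε : ℝ}
    (M : (Fin n → Fin m → Bool) → PMF (Alloc n m))
    (hDP : ∀ v v', ItemAdj v v' → ∀ o, M v o ≤ ENNReal.ofReal (Real.exp ε) * M v' o)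
    (D : Finset (Fin m)) :
    ∀ (v v' : Fin n → Fin m → Bool) (iS : Fin n),
      (∀ i, i ≠ iS → v i = v' i) → (∀ j ∉ D, v iS j = v' iS j) →
      ∀ o, M v o ≤ ENNReal.ofReal (Real.exp (D.card * ε)) * M v' o := by
  classical
  induction D using Finset.induction_on with
  | empty =>
    intro v v' iS hAg hIt o
    have hvv : v = v' := by
      funext i j
      by_cases hi : i = iS
      · subst hi; exact hIt j (by simp)
      · rw [hAg i hi]
    subst hvv
    simp
  | @insert a D ha ih =>
    intro v v' iS hAg hIt o
    set w : Fin n → Fin m → Bool :=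
      Function.update v iS (Function.update (v iS) a (v' iS a)) with hw
    have hadj : ItemAdj v w := by
      refine ⟨iS, a, ?_, ?_⟩
      · intro i hi
        rw [hw, Function.update_of_ne hi]
      · intro j hj
        rw [hw, Function.update_self, Function.update_of_ne hj]
    have h1 := hDP v w hadj o
    have h2 : M w o ≤ ENNReal.ofReal (Real.exp (D.card * ε)) * M v' o := by
      apply ih w v' iS
      · intro i hi
        rw [hw, Function.update_of_ne hi]
        exact hAg i hi
      · intro j hj
        by_cases hja : j = a
        · subst hja
          rw [hw, Function.update_self, Function.update_self]
        · rw [hw, Function.update_self, Function.update_of_ne hja]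
          exact hIt j (by simp [hja, hj])
    calc M v o ≤ ENNReal.ofReal (Real.exp ε) * M w o := h1
      _ ≤ ENNReal.ofReal (Real.exp ε) *
          (ENNReal.ofReal (Real.exp (D.card * ε)) * M v' o) := mul_le_mul_right h2 _
      _ = ENNReal.ofReal (Real.exp ((insert a D).card * ε)) * M v' o := by
          rw [← mul_assoc, ← ENNReal.ofReal_mul (Real.exp_pos _).le, ← Real.exp_add,
            Finset.card_insert_of_notMem ha]
          norm_num
          ring_nf

lemma dp_measure_le {n m : ℕ} {K : ℝ≥0∞} {p q : PMF (Alloc n m)}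
    (h : ∀ o, p o ≤ K * q o) (G : Set (Alloc n m)) :
    p.toOuterMeasure G ≤ K * q.toOuterMeasure G := by
  rw [PMF.toOuterMeasure_apply, PMF.toOuterMeasure_apply, ← ENNReal.tsum_mul_left]
  refine ENNReal.tsum_le_tsum fun o => ?_
  by_cases ho : o ∈ G <;> simp [Set.indicator, ho, h o]

set_option maxHeartbeats 1000000 in
theorem item_level_EF_lower_bound :
    ∃ ζ : ℝ, 0 < ζ ∧
      ∀ ε : ℝ, 0 < ε → ε ≤ 1 → ∀ n m : ℕ, 3 ≤ n → 1 ≤ m →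
        ∀ M : (Fin n → Fin m → Bool) → PMF (Alloc n m),
          (∀ v v', ItemAdj v v' →
            ∀ o, M v o ≤ ENNReal.ofReal (Real.exp ε) * M v' o) →
          ∃ v : Fin n → Fin m → Bool,
            (M v).toOuterMeasure
                {A : Alloc n m | ConnAlloc A.val ∧
                  EF (⌊ζ * min (Real.log m / ε)
                        (min ((m : ℝ) / n) (Real.sqrt m))⌋₊)
                    (fun i => binUtil (v i)) A.val}
              < ENNReal.ofReal 0.5 := by
  classical
  refine ⟨0.01, by norm_num, ?_⟩
  intro ε hε hε1 n m hn hm M hDP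
  set Rmin := min (Real.log m / ε) (min ((m : ℝ) / n) (Real.sqrt m)) with hRmin
  set c := ⌊(0.01:ℝ) * Rmin⌋₊ with hcdef
  have h0n : 0 < n := by omega
  have h1n : 1 < n := by omega
  by_cases hc0 : c = 0
  · -- c = 0 : all agents value only item 0; exact envy-freeness impossible
    refine ⟨fun _ j => decide (j.val = 0), ?_⟩
    have hempty : {A : Alloc n m | ConnAlloc A.val ∧
        EF c (fun i => binUtil (fun j => decide (j.val = 0))) A.val} = ∅ := by
      rw [Set.eq_empty_iff_forall_notMem]
      rintro A ⟨-, hEF⟩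
      obtain ⟨hdis, hcov⟩ := A.2
      have hj0 : (⟨0, by omega⟩ : Fin m) ∈ Finset.univ.biUnion A.1 := by
        rw [hcov]; exact Finset.mem_univ _
      obtain ⟨iO, -, hiO⟩ := Finset.mem_biUnion.mp hj0
      -- pick an agent different from iO
      obtain ⟨i, hine⟩ : ∃ i : Fin n, i ≠ iO := by
        by_cases h : iO = ⟨0, h0n⟩
        · exact ⟨⟨1, h1n⟩, by simp [h, Fin.ext_iff]⟩
        · exact ⟨⟨0, h0n⟩, fun hh => h hh.symm⟩
      obtain ⟨S, hS, hScard, hineq⟩ := hEF i iO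
      have hSempty : S = ∅ := Finset.card_eq_zero.mp (by omega)
      subst hSempty
      rw [Finset.sdiff_empty] at hineq
      have hL : binUtil (fun j : Fin m => decide (j.val = 0)) (A.1 i) = 0 := by
        unfold binUtil
        rw [Finset.card_eq_zero.mpr]
        · simp
        · rw [Finset.eq_empty_iff_forall_notMem]
          intro x hx
          rw [Finset.mem_filter] at hx
          have hx0 : x = (⟨0, by omega⟩ : Fin m) := by
            apply Fin.ext
            simpa using hx.2
          exact Finset.disjoint_left.mp (hdis i iO hine) hx.1 (hx0 ▸ hiO)
      have hR : (1:ℝ) ≤ binUtil (fun j : Fin m => decide (j.val = 0)) (A.1 iO) := by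
        unfold binUtil
        have : (⟨0, by omega⟩ : Fin m) ∈
            (A.1 iO).filter (fun j => (decide (j.val = 0) : Bool) = true) := by
          rw [Finset.mem_filter]; exact ⟨hiO, by simp⟩
        have := Finset.card_pos.mpr ⟨_, this⟩
        exact_mod_cast this
      simp only at hineq
      rw [hL] at hineq
      linarith
    rw [hempty]
    simpa using ENNReal.ofReal_pos.mpr (by norm_num : (0:ℝ) < 0.5)
  · -- main case : c ≥ 1
    have hc1 : 1 ≤ c := Nat.pos_of_ne_zero hc0
    by_contra hcon
    push_neg at hcon
    have hge : ∀ v : Fin n → Fin m → Bool,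
        ENNReal.ofReal 0.5 ≤ (M v).toOuterMeasure
          {A : Alloc n m | ConnAlloc A.val ∧ EF c (fun i => binUtil (v i)) A.val} :=
      fun v => hcon v
    -- real-number facts
    have hnR : (0:ℝ) < n := by exact_mod_cast h0n
    have hnne : (n:ℝ) ≠ 0 := ne_of_gt hnR
    have hRpos : (1:ℝ) ≤ 0.01 * Rmin := by
      by_contra h
      push_neg at h
      have : c = 0 := Nat.floor_eq_zero.mpr h
      omega
    have hcR : (c:ℝ) ≤ 0.01 * Rmin := Nat.floor_le (by linarith)
    have hc1R : (1:ℝ) ≤ (c:ℝ) := by exact_mod_cast hc1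
    have hR100 : (100:ℝ) ≤ Rmin := by linarith
    have hmin1 : Rmin ≤ Real.log m / ε := min_le_left _ _
    have hmin2 : Rmin ≤ (m:ℝ)/n := le_trans (min_le_right _ _) (min_le_left _ _)
    have hmin3 : Rmin ≤ Real.sqrt m := le_trans (min_le_right _ _) (min_le_right _ _)
    have hsm : (100:ℝ) ≤ Real.sqrt m := le_trans hR100 hmin3
    have hm0 : (0:ℝ) ≤ m := Nat.cast_nonneg m
    have hsmsq : Real.sqrt m * Real.sqrt m = m := Real.mul_self_sqrt hm0
    have hsm_m : Real.sqrt m ≤ 0.01 * m := by nlinarith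
    have hn_m : (n:ℝ) ≤ 0.01 * m := by
      have h1 : (100:ℝ) ≤ (m:ℝ) / n := le_trans hR100 hmin2
      rw [le_div_iff₀ hnR] at h1
      linarith
    have hc_sm : (c:ℝ) ≤ 0.01 * Real.sqrt m := by linarith
    have hnc_m : (n:ℝ) * c ≤ 0.01 * m := by
      have h1 : (c:ℝ) ≤ 0.01 * ((m:ℝ)/n) := by linarith
      have h2 := mul_le_mul_of_nonneg_left h1 hnR.le
      have h3 : (n:ℝ) * (0.01 * ((m:ℝ)/n)) = 0.01 * m := by field_simp
      linarith
    have hce : (c:ℝ) * ε ≤ 0.01 * Real.log m := by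
      have h1 : (c:ℝ) ≤ 0.01 * (Real.log m / ε) := by linarith
      have h2 := mul_le_mul_of_nonneg_right h1 hε.le
      have h3 : 0.01 * (Real.log m / ε) * ε = 0.01 * Real.log m := by
        field_simp
      linarith
    have hlog0 : (0:ℝ) ≤ Real.log m := by
      have h1 : (100:ℝ) ≤ Real.log m / ε := le_trans hR100 hmin1
      rw [le_div_iff₀ hε] at h1
      linarith
    -- integer parameters
    set l := n * (c+1) with hl
    set b := 3 * (c+1) with hb
    set T := (m - l)/b with hTdef
    have hbpos : 0 < b := by omega
    have hlR : (l:ℝ) = (n:ℝ) * ((c:ℝ)+1) := by rw [hl]; push_cast; ring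
    have hbR : (b:ℝ) = 3 * ((c:ℝ)+1) := by rw [hb]; push_cast; ring
    have hl_m : (l:ℝ) ≤ 0.02 * m := by
      have h1 : (n:ℝ) * ((c:ℝ)+1) = (n:ℝ)*c + n := by ring
      rw [hlR]
      linarith
    have hlm_nat : l ≤ m := by
      have h1 : (l:ℝ) ≤ (m:ℝ) := by linarith
      exact_mod_cast h1
    have hb_sm : (b:ℝ) ≤ 0.06 * Real.sqrt m := by
      rw [hbR]; linarith
    have hbe : 2*(b:ℝ)*ε ≤ 0.12 * Real.log m := by
      have h1 : (b:ℝ) ≤ 6 * c := by rw [hbR]; linarith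
      have h2 : (b:ℝ) * ε ≤ 6 * ((c:ℝ) * ε) := by
        have := mul_le_mul_of_nonneg_right h1 hε.le
        linarith
      linarith
    have hblock : ∀ t, t < T → l + t*b + b ≤ m := by
      intro t ht
      calc l + t*b + b = l + (t+1)*b := by ring
        _ ≤ l + T*b := Nat.add_le_add_left (Nat.mul_le_mul_right _ ht) l
        _ ≤ l + (m - l) := Nat.add_le_add_left (Nat.div_mul_le_self _ _) l
        _ = m := by omega
    -- profiles, blocks, events
    set i0 : Fin n := ⟨0, h0n⟩ with hi0
    set i1 : Fin n := ⟨1, h1n⟩ with hi1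
    have h01 : i0 ≠ i1 := by simp [hi0, hi1, Fin.ext_iff]
    set vt : ℕ → (Fin n → Fin m → Bool) := fun t i j =>
      if i.val < 2 then decide (l + t*b ≤ j.val ∧ j.val < l + t*b + b)
      else decide (j.val < l) with hvt
    set vbase : Fin n → Fin m → Bool := fun i j =>
      if i.val < 2 then false else decide (j.val < l) with hvbase
    set Bf : ℕ → Finset (Fin m) := fun t =>
      Finset.univ.filter (fun j : Fin m => l + t*b ≤ j.val ∧ j.val < l + t*b + b) with hBf
    have hBcard : ∀ t, t < T → (Bf t).card = b := by
      intro t ht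
      rw [hBf]
      exact card_filter_interval _ _ (hblock t ht)
    set G : ℕ → Set (Alloc n m) := fun t =>
      {A : Alloc n m | ConnAlloc A.val ∧
        (∃ x ∈ A.val i0, l + t*b ≤ x.val ∧ x.val < l + t*b + b) ∧
        (∃ x ∈ A.val i1, l + t*b ≤ x.val ∧ x.val < l + t*b + b)} with hG
    set Lf : Finset (Fin m) := Finset.univ.filter (fun j : Fin m => j.val < l) with hLf
    have hLcard : Lf.card = l := by
      have h1 := card_filter_interval (m := m) 0 l (by omega)
      have h2 : Lf = Finset.univ.filter (fun j : Fin m => 0 ≤ j.val ∧ j.val < 0 + l) := by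
        rw [hLf]
        ext j
        simp
      rw [h2, h1]
    -- Claim A : good allocations are in G t
    have claimA : ∀ t, t < T → ∀ A : Alloc n m,
        ConnAlloc A.val → EF c (fun i => binUtil (vt t i)) A.val → A ∈ G t := by
      intro t ht A hconn hEF
      obtain ⟨hdis, hcov⟩ := A.2
      -- pigeonhole on Lf
      obtain ⟨iM, hiM⟩ : ∃ i : Fin n, c + 1 ≤ (A.1 i ∩ Lf).card := by
        by_contra hno
        push_neg at hno
        have hsum := sum_inter_card ⟨hdis, hcov⟩ Lf
        rw [hLcard] at hsum
        have hle : ∑ i : Fin n, (A.1 i ∩ Lf).card ≤ ∑ _i : Fin n, c :=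
          Finset.sum_le_sum (fun i _ => by have := hno i; omega)
        rw [Finset.sum_const, Finset.card_univ, Fintype.card_fin, smul_eq_mul, hsum] at hle
        rw [hl] at hle
        have hlt : n * c < n * (c+1) := Nat.mul_lt_mul_of_pos_left (Nat.lt_succ_self c) h0n
        exact absurd hle (not_le.mpr hlt)
      -- every agent with index ≥ 2 holds an item of Lf
      have hLagent : ∀ i2 : Fin n, 2 ≤ i2.val → ∃ y ∈ A.1 i2, y.val < l := by
        intro i2 hi2
        have hi2n : ¬ i2.val < 2 := by omega
        obtain ⟨S, hS, hScard, hineq⟩ := hEF i2 iM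
        have hval : c + 1 ≤ ((A.1 iM).filter (fun j => vt t i2 j = true)).card := by
          have heq : (A.1 iM).filter (fun j => vt t i2 j = true) = A.1 iM ∩ Lf := by
            ext j
            simp [hvt, hLf, hi2n, show ¬ i2.val ≤ 1 by omega]
          rw [heq]
          exact hiM
        obtain ⟨y, hy, hyv⟩ := ef_extract hScard hval hineq
        refine ⟨y, hy, ?_⟩
        simpa [hvt, hi2n, show ¬ i2.val ≤ 1 by omega] using hyv
      -- owner of the first block item
      have hpm : l + t*b < m := by have := hblock t ht; omega
      have hpcov : (⟨l + t*b, hpm⟩ : Fin m) ∈ Finset.univ.biUnion A.1 := by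
        rw [hcov]; exact Finset.mem_univ _
      obtain ⟨iP, -, hiP⟩ := Finset.mem_biUnion.mp hpcov
      -- high agents intersecting the block must be iP
      have hhigh : ∀ i2 : Fin n, 2 ≤ i2.val →
          (∃ x ∈ A.1 i2, l + t*b ≤ x.val ∧ x.val < l + t*b + b) → i2 = iP := by
        rintro i2 hi2 ⟨x, hx, hx1, hx2⟩
        obtain ⟨y, hy, hyl⟩ := hLagent i2 hi2
        have hpin : (⟨l + t*b, hpm⟩ : Fin m) ∈ A.1 i2 := by
          apply hconn i2 y _ x hy hx
          · rw [Fin.le_def]; show y.val ≤ l + t*b; omega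
          · rw [Fin.le_def]; show l + t*b ≤ x.val; omega
        by_contra hne
        exact Finset.disjoint_left.mp (hdis i2 iP hne) hpin hiP
      -- pigeonhole over the block among {i0, i1, iP}
      have hsumB := sum_inter_card ⟨hdis, hcov⟩ (Bf t)
      rw [hBcard t ht] at hsumB
      obtain ⟨iS, hiS⟩ : ∃ i : Fin n, c + 1 ≤ (A.1 i ∩ Bf t).card := by
        by_contra hno
        push_neg at hno
        have hzero : ∀ i ∈ Finset.univ, i ∉ ({i0, i1, iP} : Finset (Fin n)) →
            (A.1 i ∩ Bf t).card = 0 := by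
          intro i _ hnotin
          simp only [Finset.mem_insert, Finset.mem_singleton, not_or] at hnotin
          obtain ⟨hne0, hne1, hneP⟩ := hnotin
          have hi2 : 2 ≤ i.val := by
            have hv0 : i.val ≠ 0 := fun hvv => hne0 (Fin.ext (by simp [hi0, hvv]))
            have hv1 : i.val ≠ 1 := fun hvv => hne1 (Fin.ext (by simp [hi1, hvv]))
            omega
          rw [Finset.card_eq_zero, Finset.eq_empty_iff_forall_notMem]
          intro x hx
          rw [Finset.mem_inter] at hx
          have hxB : l + t*b ≤ x.val ∧ x.val < l + t*b + b := by
            have := hx.2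
            rw [hBf] at this
            simpa using this
          exact hneP (hhigh i hi2 ⟨x, hx.1, hxB⟩)
        have hsum2 : ∑ i ∈ ({i0, i1, iP} : Finset (Fin n)), (A.1 i ∩ Bf t).card
            = ∑ i : Fin n, (A.1 i ∩ Bf t).card :=
          Finset.sum_subset (Finset.subset_univ _) hzero
        have hcard3 : ({i0, i1, iP} : Finset (Fin n)).card ≤ 3 := by
          calc ({i0, i1, iP} : Finset (Fin n)).card
              ≤ ({i1, iP} : Finset (Fin n)).card + 1 := Finset.card_insert_le _ _
            _ ≤ (({iP} : Finset (Fin n)).card + 1) + 1 :=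
                Nat.add_le_add_right (Finset.card_insert_le _ _) 1
            _ = 3 := by simp
        have hle3 : ∑ i ∈ ({i0, i1, iP} : Finset (Fin n)), (A.1 i ∩ Bf t).card ≤ 3 * c := by
          calc ∑ i ∈ ({i0, i1, iP} : Finset (Fin n)), (A.1 i ∩ Bf t).card
              ≤ ({i0, i1, iP} : Finset (Fin n)).card * c := by
                apply Finset.sum_le_card_nsmul
                intro x _
                have := hno x
                omega
            _ ≤ 3 * c := Nat.mul_le_mul_right c hcard3
        rw [hsum2, hsumB, hb] at hle3
        omega
      -- conclude membership in G t
      have hfilter : ∀ ii : Fin n, ii.val < 2 →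
          c + 1 ≤ ((A.1 iS).filter (fun j => vt t ii j = true)).card := by
        intro ii hii
        have heq : (A.1 iS).filter (fun j => vt t ii j = true) = A.1 iS ∩ Bf t := by
          ext j
          simp [hvt, hBf, hii, show ii.val ≤ 1 by omega]
        rw [heq]
        exact hiS
      have hG0 : ∃ x ∈ A.1 i0, l + t*b ≤ x.val ∧ x.val < l + t*b + b := by
        obtain ⟨S, hS, hScard, hineq⟩ := hEF i0 iS
        obtain ⟨x, hx, hxv⟩ := ef_extract hScard (hfilter i0 (by simp [hi0])) hineq
        refine ⟨x, hx, ?_⟩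
        simpa [hvt, hi0] using hxv
      have hG1 : ∃ x ∈ A.1 i1, l + t*b ≤ x.val ∧ x.val < l + t*b + b := by
        obtain ⟨S, hS, hScard, hineq⟩ := hEF i1 iS
        obtain ⟨x, hx, hxv⟩ := ef_extract hScard (hfilter i1 (by simp [hi1])) hineq
        refine ⟨x, hx, ?_⟩
        simpa [hvt, hi1] using hxv
      show A ∈ G t
      rw [hG]
      exact ⟨hconn, hG0, hG1⟩
    -- Claim B : the events are pairwise disjoint
    have claimB : ∀ t1 t2, t1 < t2 → t2 < T → ∀ A : Alloc n m,
        A ∈ G t1 → A ∈ G t2 → False := by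
      intro t1 t2 h12 ht2 A hA1 hA2
      rw [hG] at hA1 hA2
      obtain ⟨hconn, ⟨x0, hx0, hx0b⟩, ⟨x1, hx1, hx1b⟩⟩ := hA1
      obtain ⟨-, ⟨y0, hy0, hy0b⟩, ⟨y1, hy1, hy1b⟩⟩ := hA2
      obtain ⟨hdis, -⟩ := A.2
      have hpm : l + t2*b < m := by have := hblock t2 ht2; omega
      have hstep : t1*b + b ≤ t2*b := by
        calc t1*b + b = (t1+1)*b := by ring
          _ ≤ t2*b := Nat.mul_le_mul_right _ h12
      have hp0 : (⟨l + t2*b, hpm⟩ : Fin m) ∈ A.1 i0 := by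
        apply hconn i0 x0 _ y0 hx0 hy0
        · rw [Fin.le_def]; show x0.val ≤ l + t2*b; omega
        · rw [Fin.le_def]; show l + t2*b ≤ y0.val; omega
      have hp1 : (⟨l + t2*b, hpm⟩ : Fin m) ∈ A.1 i1 := by
        apply hconn i1 x1 _ y1 hx1 hy1
        · rw [Fin.le_def]; show x1.val ≤ l + t2*b; omega
        · rw [Fin.le_def]; show l + t2*b ≤ y1.val; omega
      exact Finset.disjoint_left.mp (hdis i0 i1 h01) hp0 hp1
    -- group privacy from v_t to vbase
    have hDPt : ∀ t, t < T → ∀ o,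
        M (vt t) o ≤ ENNReal.ofReal (Real.exp (2*(b:ℝ)*ε)) * M vbase o := by
      intro t ht o
      set w : Fin n → Fin m → Bool := Function.update (vt t) i0 (vbase i0) with hw
      have hstep1 : ∀ o, M (vt t) o ≤
          ENNReal.ofReal (Real.exp ((Bf t).card * ε)) * M w o := by
        apply dp_one_agent M hDP (Bf t) (vt t) w i0
        · intro i hi
          rw [hw, Function.update_of_ne hi]
        · intro j hj
          rw [hw, Function.update_self]
          have hjb : ¬ (l + t*b ≤ j.val ∧ j.val < l + t*b + b) := by
            intro hcontra
            apply hj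
            rw [hBf]
            simp [hcontra]
          simp [hvt, hvbase, hi0, hjb]
          intro h1
          by_contra h2
          exact hjb ⟨h1, lt_of_not_ge h2⟩
      have hstep2 : ∀ o, M w o ≤
          ENNReal.ofReal (Real.exp ((Bf t).card * ε)) * M vbase o := by
        apply dp_one_agent M hDP (Bf t) w vbase i1
        · intro i hi
          by_cases hzero : i = i0
          · subst hzero
            rw [hw, Function.update_self]
          · rw [hw, Function.update_of_ne hzero]
            have hi2 : ¬ i.val < 2 := by
              intro hlt
              have hv : i.val = 0 ∨ i.val = 1 := by omega
              rcases hv with hv | hv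
              · exact hzero (Fin.ext (by simp [hi0, hv]))
              · exact hi (Fin.ext (by simp [hi1, hv]))
            funext j
            simp [hvt, hvbase, hi2, show ¬ i.val ≤ 1 by omega]
        · intro j hj
          rw [hw, Function.update_of_ne (Ne.symm h01)]
          have hjb : ¬ (l + t*b ≤ j.val ∧ j.val < l + t*b + b) := by
            intro hcontra
            apply hj
            rw [hBf]
            simp [hcontra]
          simp [hvt, hvbase, hi1, hjb]
          intro h1
          by_contra h2
          exact hjb ⟨h1, lt_of_not_ge h2⟩
      calc M (vt t) o ≤ ENNReal.ofReal (Real.exp ((Bf t).card * ε)) * M w o := hstep1 o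
        _ ≤ ENNReal.ofReal (Real.exp ((Bf t).card * ε)) *
            (ENNReal.ofReal (Real.exp ((Bf t).card * ε)) * M vbase o) :=
            mul_le_mul_right (hstep2 o) _
        _ = ENNReal.ofReal (Real.exp (2*(b:ℝ)*ε)) * M vbase o := by
            rw [← mul_assoc, ← ENNReal.ofReal_mul (Real.exp_pos _).le, ← Real.exp_add,
              hBcard t ht]
            ring_nf
    -- each event has large measure under vbase
    have hge' : ∀ t, t < T →
        ENNReal.ofReal 0.5 ≤
          ENNReal.ofReal (Real.exp (2*(b:ℝ)*ε)) * (M vbase).toOuterMeasure (G t) := by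
      intro t ht
      have h1 := hge (vt t)
      have h2 : (M (vt t)).toOuterMeasure
            {A : Alloc n m | ConnAlloc A.val ∧ EF c (fun i => binUtil (vt t i)) A.val}
          ≤ (M (vt t)).toOuterMeasure (G t) :=
        (M (vt t)).toOuterMeasure.mono (fun A hA => claimA t ht A hA.1 hA.2)
      have h3 := dp_measure_le (hDPt t ht) (G t)
      exact le_trans h1 (le_trans h2 h3)
    -- the events are disjoint, so measures sum to at most one
    have hsum1 : ∑ t ∈ Finset.range T, (M vbase).toOuterMeasure (G t) ≤ 1 := by
      have hpt : ∀ o : Alloc n m,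
          ∑ t ∈ Finset.range T, Set.indicator (G t) (⇑(M vbase)) o ≤ M vbase o := by
        intro o
        by_cases hex : ∃ t ∈ Finset.range T, o ∈ G t
        · obtain ⟨t0, ht0, ho⟩ := hex
          have heq : ∑ t ∈ Finset.range T, Set.indicator (G t) (⇑(M vbase)) o
              = Set.indicator (G t0) (⇑(M vbase)) o := by
            apply Finset.sum_eq_single_of_mem t0 ht0
            intro t ht hne
            apply Set.indicator_of_notMem
            intro hmem
            rcases lt_or_gt_of_ne hne with hlt | hgt
            · exact claimB t t0 hlt (Finset.mem_range.mp ht0) o hmem ho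
            · exact claimB t0 t hgt (Finset.mem_range.mp ht) o ho hmem
          rw [heq, Set.indicator_of_mem ho]
        · push_neg at hex
          have hz : ∀ t ∈ Finset.range T, Set.indicator (G t) (⇑(M vbase)) o = 0 :=
            fun t ht => Set.indicator_of_notMem (hex t ht) _
          rw [Finset.sum_congr rfl hz, Finset.sum_const, smul_zero]
          exact zero_le
      calc ∑ t ∈ Finset.range T, (M vbase).toOuterMeasure (G t)
          = ∑ t ∈ Finset.range T, ∑' o, Set.indicator (G t) (⇑(M vbase)) o := by
            refine Finset.sum_congr rfl fun t _ => ?_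
            rw [PMF.toOuterMeasure_apply]
        _ = ∑' o, ∑ t ∈ Finset.range T, Set.indicator (G t) (⇑(M vbase)) o :=
            (Summable.tsum_finsetSum (fun t _ => ENNReal.summable)).symm
        _ ≤ ∑' o, M vbase o := ENNReal.tsum_le_tsum hpt
        _ = 1 := (M vbase).tsum_coe
    -- combine
    have hT05 : (T : ℝ≥0∞) * ENNReal.ofReal 0.5 ≤ ENNReal.ofReal (Real.exp (2*(b:ℝ)*ε)) := by
      calc (T : ℝ≥0∞) * ENNReal.ofReal 0.5
          = ∑ _t ∈ Finset.range T, ENNReal.ofReal 0.5 := by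
            rw [Finset.sum_const, Finset.card_range, nsmul_eq_mul]
        _ ≤ ∑ t ∈ Finset.range T,
              ENNReal.ofReal (Real.exp (2*(b:ℝ)*ε)) * (M vbase).toOuterMeasure (G t) :=
            Finset.sum_le_sum (fun t ht => hge' t (Finset.mem_range.mp ht))
        _ = ENNReal.ofReal (Real.exp (2*(b:ℝ)*ε)) *
              ∑ t ∈ Finset.range T, (M vbase).toOuterMeasure (G t) := by
            rw [Finset.mul_sum]
        _ ≤ ENNReal.ofReal (Real.exp (2*(b:ℝ)*ε)) * 1 := mul_le_mul_right hsum1 _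
        _ = _ := mul_one _
    have hreal : (T:ℝ) * 0.5 ≤ Real.exp (2*(b:ℝ)*ε) := by
      have h1 : ENNReal.ofReal ((T:ℝ) * 0.5) ≤ ENNReal.ofReal (Real.exp (2*(b:ℝ)*ε)) := by
        rw [ENNReal.ofReal_mul (by positivity)]
        rw [ENNReal.ofReal_natCast]
        exact hT05
      exact (ENNReal.ofReal_le_ofReal_iff (Real.exp_pos _).le).mp h1
    -- numeric contradiction
    have hmod : m - l < b * T + b := by
      have h1 := Nat.div_add_mod (m - l) b
      have h2 := Nat.mod_lt (m - l) hbpos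
      calc m - l = b * T + (m - l) % b := h1.symm
        _ < b * T + b := Nat.add_lt_add_left h2 _
    have hcast : (m:ℝ) - l < (b:ℝ) * T + b := by
      have h3 : ((m - l : ℕ) : ℝ) = (m:ℝ) - (l:ℝ) := by
        rw [Nat.cast_sub hlm_nat]
      calc (m:ℝ) - l = ((m - l : ℕ) : ℝ) := h3.symm
        _ < (((b * T + b : ℕ)) : ℝ) := by exact_mod_cast hmod
        _ = (b:ℝ) * T + b := by push_cast; ring
    have hsm0 : (0:ℝ) < Real.sqrt m := by linarith only [hsm]
    have hTcast0 : (0:ℝ) ≤ (T:ℝ) := Nat.cast_nonneg T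
    have h7 : (10000:ℝ) ≤ Real.sqrt m * Real.sqrt m := by
      have h8 := mul_le_mul hsm hsm (by norm_num) (by linarith only [hsm])
      linarith only [h8]
    have hTlow : 16 * Real.sqrt m ≤ (T:ℝ) := by
      by_contra hcontra
      push_neg at hcontra
      have h4 : (b:ℝ)*T ≤ (0.06*Real.sqrt m)*T := mul_le_mul_of_nonneg_right hb_sm hTcast0
      have h5 : 0.97 * (Real.sqrt m * Real.sqrt m) ≤ 0.06*(Real.sqrt m * T) := by
        linarith only [hcast, h4, hl_m, hsm_m, hb_sm, hsmsq]
      have h6 : Real.sqrt m * T < Real.sqrt m * (16 * Real.sqrt m) :=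
        mul_lt_mul_of_pos_left hcontra hsm0
      linarith only [h5, h6, h7]
    have hmpos : (0:ℝ) < m := by linarith only [h7, hsmsq]
    have hsqrt_exp : Real.sqrt m = Real.exp (0.5 * Real.log m) := by
      have h1 : (m:ℝ) = Real.exp (0.5 * Real.log m) * Real.exp (0.5 * Real.log m) := by
        rw [← Real.exp_add, show (0.5 * Real.log m + 0.5 * Real.log m) = Real.log m by ring,
          Real.exp_log hmpos]
      calc Real.sqrt m
          = Real.sqrt (Real.exp (0.5 * Real.log m) * Real.exp (0.5 * Real.log m)) := by
            rw [← h1]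
        _ = Real.exp (0.5 * Real.log m) := Real.sqrt_mul_self (Real.exp_pos _).le
    have hexp_le : Real.exp (2*(b:ℝ)*ε) ≤ Real.sqrt m := by
      rw [hsqrt_exp]
      apply Real.exp_le_exp.mpr
      linarith only [hbe, hlog0]
    linarith only [hreal, hTlow, hexp_le, hsm]
end

section
/- Let n ≥ 3, m, c ≥ 1, and T ≥ 1 be integers satisfying (2c+1)·T ≤ m/2 and (c+1)(n−2) < m/2. For each t ∈ {1,…,T}, let u^t = (u^t_1,…,u^t_n) be the profile of binary additive utility functions over M = {1,…,m} given by: u^t_1(j) = u^t_2(j) = 1 if ⌊(j−1)/(2c+1)⌋ = t−1 and 0 otherwise; and for each agent i ∈ {3,…,n}, u^t_i(j) = 1 if j ≥ m − (c+1)(n−2) and 0 otherwise. Then for any distinct t, t' ∈ {1,…,T}, no connected allocation is simultaneously EFc with respect to u^t and EFc with respect to u^{t'}. -/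
/-- The binary values of the profile `u^t` from the EF packing lower bound:
agents 1 and 2 (indices `0, 1`) value item `j` (1-indexed value `(j : ℕ) + 1`) iff
`⌊(j−1)/(2c+1)⌋ = t−1`; agents 3,…,n value item `j` iff `j ≥ m − (c+1)(n−2)`. -/
def uEF (n m c t : ℕ) : Fin n → Fin m → Bool := fun i j =>
  if (i : ℕ) < 2 then decide ((j : ℕ) / (2 * c + 1) = t - 1)
  else decide (m - (c + 1) * (n - 2) ≤ (j : ℕ) + 1)

/-!
Fix `t` and a connected EFc allocation for `u^t`. The tail, the last `(c+1)(n-2)+1` items, is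
valued only by agents `3, …, n`. If one of them gets no tail item, EFc caps every tail count at
`c`, so every other agent gets a tail item; otherwise only agents `1, 2` can miss the tail. Either
way, for `p ∈ {1, 2}` at most one agent other than `p` gets no tail item. Block `t` ends before
the first tail item, so by connectivity at most one agent owns items of both. Hence at most two
agents besides `p` own items of block `t`, each at most `c` more than `p` does; as the block has
`2c+1` items, `p` owns one of them. For `t < t'` agents `1` and `2` then both own items of blocks
`t` and `t'`, hence both own the last item of block `t`.
-/

open Finset

section Counting

variable {ι : Type*} [Fintype ι]

lemma sum_le_add_card_mul [DecidableEq ι] {f : ι → ℕ} {p : ι} {c : ℕ}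
    (hf : ∀ i, f i ≤ f p + c) :
    ∑ i, f i ≤ f p + #{i ∈ univ.erase p | f i ≠ 0} * (f p + c) := by
  rw [← add_sum_erase _ _ (mem_univ p), ← sum_filter_ne_zero]
  gcongr
  simpa using sum_le_card_nsmul _ f _ fun i _ => hf i

lemma card_filter_eq_zero_le_one {f : ι → ℕ} {c : ℕ} (hf : ∀ i, f i ≤ c)
    (hsum : c * (Fintype.card ι - 2) < ∑ i, f i) : #{i | f i = 0} ≤ 1 := by
  by_contra! hzero
  have hcard : #{i | f i ≠ 0} + #{i | f i = 0} = Fintype.card ι := by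
    rw [add_comm]; exact card_filter_add_card_filter_not _
  have hsupp : ∑ i, f i ≤ #{i | f i ≠ 0} * c := by
    rw [← sum_filter_ne_zero]; simpa using sum_le_card_nsmul _ f c fun i _ => hf i
  have : #{i | f i ≠ 0} * c ≤ (Fintype.card ι - 2) * c := Nat.mul_le_mul_right _ (by omega)
  linarith [mul_comm c (Fintype.card ι - 2)]

end Counting

lemma card_erase_filter_eq_zero_le_one {n c : ℕ} {h : Fin n → ℕ}
    (hh : ∀ j : Fin n, 2 ≤ (j : ℕ) → ∀ i, h i ≤ h j + c) (hsum : c * (n - 2) < ∑ i, h i)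
    {p : Fin n} (hp : (p : ℕ) < 2) : #{i ∈ univ.erase p | h i = 0} ≤ 1 := by
  by_cases hj : ∃ j : Fin n, 2 ≤ (j : ℕ) ∧ h j = 0
  · obtain ⟨j, hj2, hj0⟩ := hj
    refine (card_le_card fun i => ?_).trans
      (card_filter_eq_zero_le_one (c := c) (fun i => ?_) (by simpa using hsum))
    · simp
    · simpa [hj0] using hh j hj2 i
  · push Not at hj
    refine card_le_one.2 fun i hi i' hi' => ?_
    simp only [mem_filter, mem_erase, ne_eq, Fin.ext_iff] at hi hi'
    have := hj i; have := hj i'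
    ext; omega

lemma card_filter_Ico_val {m : ℕ} (lo hi : ℕ) (h : hi ≤ m) :
    #{j : Fin m | lo ≤ (j : ℕ) ∧ (j : ℕ) < hi} = hi - lo := by
  rw [← card_map Fin.valEmbedding, map_filter', Fin.map_valEmbedding_univ, ← Nat.card_Ico]
  congr 1; ext j
  simp only [mem_filter, mem_Iio, Fin.valEmbedding_apply, mem_Ico]
  exact ⟨fun ⟨_, a, ha, hj⟩ => hj ▸ ha, fun hj => ⟨by omega, ⟨j, by omega⟩, hj, rfl⟩⟩

lemma div_eq_iff_le_and_lt {k x y : ℕ} (hk : 0 < k) :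
    x / k = y ↔ k * y ≤ x ∧ x < k * (y + 1) := by
  rw [Nat.div_eq_iff hk, mul_comm, mul_add_one]; omega

lemma card_filter_div_eq {m k : ℕ} (s : ℕ) (hk : 0 < k) (h : k * (s + 1) ≤ m) :
    #{j : Fin m | (j : ℕ) / k = s} = k := by
  simp_rw [div_eq_iff_le_and_lt hk]
  rw [card_filter_Ico_val _ _ h, mul_add_one, Nat.add_sub_cancel_left]

lemma card_filter_sub_le {m K : ℕ} (hK : K < m) : #{j : Fin m | m - K ≤ (j : ℕ) + 1} = K + 1 := by
  have htail (j : Fin m) : m - K ≤ (j : ℕ) + 1 ↔ m - K - 1 ≤ (j : ℕ) ∧ (j : ℕ) < m := by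
    have := j.isLt; omega
  simp_rw [htail]
  rw [card_filter_Ico_val _ _ le_rfl]
  omega

section Allocation

variable {n m : ℕ} {A : Fin n → Finset (Fin m)}

lemma IsPartition.eq_of_mem (hA : IsPartition A) {i i' : Fin n} {j : Fin m} (hi : j ∈ A i)
    (hi' : j ∈ A i') : i = i' := by
  by_contra hne
  exact disjoint_left.1 (hA.1 i i' hne) hi hi'

lemma IsPartition.sum_card_filter (hA : IsPartition A) (P : Fin m → Prop) [DecidablePred P] :
    ∑ i, #{j ∈ A i | P j} = #{j | P j} := by
  rw [← hA.2, filter_biUnion, card_biUnion]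
  exact fun i _ i' _ hne => (hA.1 i i' hne).mono (filter_subset _ _) (filter_subset _ _)

lemma EF.card_filter_le {c : ℕ} {v : Fin n → Fin m → Bool}
    (hEF : EF c (fun i => binUtil (v i)) A) (i i' : Fin n) :
    #{j ∈ A i' | v i j} ≤ #{j ∈ A i | v i j} + c := by
  obtain ⟨S, -, hSc, hle⟩ := hEF i i'
  have hle : #{j ∈ A i' \ S | v i j} ≤ #{j ∈ A i | v i j} := by
    simpa only [binUtil, ge_iff_le, Nat.cast_le] using hle
  calc #{j ∈ A i' | v i j} ≤ #({j ∈ A i' \ S | v i j} ∪ S) :=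
        card_le_card fun j hj => by simp only [mem_filter, mem_union, mem_sdiff] at hj ⊢; tauto
    _ ≤ #{j ∈ A i | v i j} + c := (card_union_le _ _).trans (by omega)

end Allocation

lemma ConnAlloc.mem_of_div_lt {n m k : ℕ} {A : Fin n → Finset (Fin m)} (hC : ConnAlloc A)
    (hk : 0 < k) {i : Fin n} {a b z : Fin m} (ha : a ∈ A i) (hb : b ∈ A i)
    (hab : (a : ℕ) / k < (b : ℕ) / k) (hz : (z : ℕ) + 1 = k * ((a : ℕ) / k + 1)) :
    z ∈ A i := by
  have hbk : k * ((a : ℕ) / k + 1) ≤ b :=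
    ((div_eq_iff_le_and_lt hk).1 rfl).1.trans' (Nat.mul_le_mul_left k hab)
  have hak : (a : ℕ) < k * ((a : ℕ) / k + 1) := ((div_eq_iff_le_and_lt hk).1 rfl).2
  exact hC i a z b ha hb (Fin.le_def.2 (by omega)) (Fin.le_def.2 (by omega))

theorem exists_mem_block_of_EF {n m c t : ℕ} (ht : 1 ≤ t)
    (hm : (2 * c + 1) * t + (c + 1) * (n - 2) < m) {A : Fin n → Finset (Fin m)}
    (hA : IsPartition A) (hC : ConnAlloc A) (hEF : EF c (fun i => binUtil (uEF n m c t i)) A)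
    {p : Fin n} (hp : (p : ℕ) < 2) : ∃ j ∈ A p, (j : ℕ) / (2 * c + 1) = t - 1 := by
  set K := (c + 1) * (n - 2)
  set x : Fin n → ℕ := fun i =>
    #((A i).filter fun j : Fin m => (j : ℕ) / (2 * c + 1) = t - 1)
  set h : Fin n → ℕ := fun i => #((A i).filter fun j : Fin m => m - K ≤ (j : ℕ) + 1)
  have hblock (j : ℕ) :
      j / (2 * c + 1) = t - 1 ↔ (2 * c + 1) * (t - 1) ≤ j ∧ j < (2 * c + 1) * t := by
    rw [div_eq_iff_le_and_lt (by omega), Nat.sub_add_cancel ht]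
  have hx : ∀ i, x i ≤ x p + c := fun i => by
    simpa only [uEF, if_pos hp, decide_eq_true_eq] using hEF.card_filter_le p i
  have hh : ∀ j : Fin n, 2 ≤ (j : ℕ) → ∀ i, h i ≤ h j + c := fun j hj i => by
    simpa only [uEF, if_neg hj.not_gt, decide_eq_true_eq] using hEF.card_filter_le j i
  have hsum_x : ∑ i, x i = 2 * c + 1 :=
    (hA.sum_card_filter _).trans <|
      card_filter_div_eq _ (by omega) (by rw [Nat.sub_add_cancel ht]; omega)
  have hsum_h : ∑ i, h i = K + 1 := (hA.sum_card_filter _).trans (card_filter_sub_le (by omega))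
  -- every agent owning items of both the block and the tail owns the first tail item
  have hspan : #{i | x i ≠ 0 ∧ h i ≠ 0} ≤ 1 := by
    have hpivot : ∀ i, x i ≠ 0 → h i ≠ 0 → (⟨m - K - 1, by omega⟩ : Fin m) ∈ A i := by
      intro i hxi hhi
      obtain ⟨a, ha⟩ := card_pos.1 (Nat.pos_of_ne_zero hxi)
      obtain ⟨b, hb⟩ := card_pos.1 (Nat.pos_of_ne_zero hhi)
      rw [mem_filter, hblock] at ha
      rw [mem_filter] at hb
      exact hC i a _ b ha.1 hb.1 (Fin.le_def.2 (by dsimp only; omega))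
        (Fin.le_def.2 (by dsimp only; omega))
    refine card_le_one.2 fun i hi i' hi' => ?_
    rw [mem_filter] at hi hi'
    exact hA.eq_of_mem (hpivot i hi.2.1 hi.2.2) (hpivot i' hi'.2.1 hi'.2.2)
  have hrest : #{i ∈ univ.erase p | x i ≠ 0} ≤ 2 := calc
    _ ≤ #(({i | x i ≠ 0 ∧ h i ≠ 0} : Finset (Fin n)) ∪ {i ∈ univ.erase p | h i = 0}) :=
      card_le_card fun i hi => by
        simp only [ne_eq, mem_filter, mem_erase, mem_univ, and_true, mem_union, true_and] at hi ⊢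
        tauto
    _ ≤ 1 + 1 := (card_union_le _ _).trans <| add_le_add hspan <|
      card_erase_filter_eq_zero_le_one hh
        (by rw [hsum_h]; exact Nat.lt_succ_of_le (Nat.mul_le_mul_right _ c.le_succ)) hp
  have hxp : 0 < x p := by nlinarith [sum_le_add_card_mul hx]
  obtain ⟨j, hj⟩ := card_pos.1 hxp
  exact ⟨j, (mem_filter.1 hj).1, (mem_filter.1 hj).2⟩

theorem EF_packing_disjoint_general (n m c T : ℕ) (hn : 3 ≤ n)
    (h1 : (((2 * c + 1) * T : ℕ) : ℝ) ≤ (m : ℝ) / 2)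
    (h2 : (((c + 1) * (n - 2) : ℕ) : ℝ) < (m : ℝ) / 2) :
    ∀ t t' : ℕ, 1 ≤ t → t ≤ T → 1 ≤ t' → t' ≤ T → t ≠ t' →
      ∀ A : Fin n → Finset (Fin m), IsPartition A → ConnAlloc A →
        ¬ (EF c (fun i => binUtil (uEF n m c t i)) A ∧
            EF c (fun i => binUtil (uEF n m c t' i)) A) := by
  intro t t' ht htT ht' ht'T hne A hA hC hEF
  wlog hlt : t < t' generalizing t t'
  · exact this t' t ht' ht'T ht htT hne.symm hEF.symm (by omega)
  have hm (s : ℕ) (hs : s ≤ T) : (2 * c + 1) * s + (c + 1) * (n - 2) < m := by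
    have : ((2 * c + 1) * s : ℝ) ≤ (2 * c + 1) * T := by
      exact_mod_cast Nat.mul_le_mul_left _ hs
    have : (((2 * c + 1) * s + (c + 1) * (n - 2) : ℕ) : ℝ) < m := by push_cast at *; linarith
    exact_mod_cast this
  have hz (i : Fin n) (hi : (i : ℕ) < 2) :
      (⟨(2 * c + 1) * t - 1, by have := hm t htT; omega⟩ : Fin m) ∈ A i := by
    obtain ⟨a, ha, hat⟩ := exists_mem_block_of_EF ht (hm t htT) hA hC hEF.1 hi
    obtain ⟨b, hb, hbt⟩ := exists_mem_block_of_EF ht' (hm t' ht'T) hA hC hEF.2 hi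
    refine hC.mem_of_div_lt (2 * c).succ_pos ha hb (by rw [hat, hbt]; omega) ?_
    rw [hat, Nat.sub_add_cancel ht]
    exact Nat.sub_add_cancel (Nat.mul_pos (by omega) ht)
  exact absurd (hA.eq_of_mem (hz ⟨0, by omega⟩ (by simp)) (hz ⟨1, by omega⟩ (by simp)))
    (by simp)

theorem EF_packing_disjoint (n m c T : ℕ) (hn : 3 ≤ n) (hc : 1 ≤ c) (hT : 1 ≤ T)
    (h1 : (((2 * c + 1) * T : ℕ) : ℝ) ≤ (m : ℝ) / 2)
    (h2 : (((c + 1) * (n - 2) : ℕ) : ℝ) < (m : ℝ) / 2) :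
    ∀ t t' : ℕ, 1 ≤ t → t ≤ T → 1 ≤ t' → t' ≤ T → t ≠ t' →
      ∀ A : Fin n → Finset (Fin m), IsPartition A → ConnAlloc A →
        ¬ (EF c (fun i => binUtil (uEF n m c t i)) A ∧
            EF c (fun i => binUtil (uEF n m c t' i)) A) :=
  EF_packing_disjoint_general n m c T hn h1 h2
end

section
/- There exists a constant ζ > 0 (one may take ζ = 0.01) such that for every ε ∈ (0,1] and all positive integers n ≥ 3 and m, the following holds with c = ⌊ζ·min{log(m/n)/(εn), m/n, √(m/n)}⌋: for every (agent × item)-level ε-differentially private randomized algorithm M mapping profiles of binary additive utility functions (for n agents and m items) to probability distributions over allocations, there exists a profile u of binary additive utility functions such that the probability that M(u) outputs a connected allocation that is PROPc with respect to u is less than 0.5. -/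
set_option maxHeartbeats 1000000


open scoped ENNReal

private lemma groupPrivacy {n m : ℕ} {ε : ℝ} (hε : 0 ≤ ε)
    (M : (Fin n → Fin m → Bool) → PMF (Alloc n m))
    (hDP : ∀ v v', ItemAdj v v' → ∀ o, M v o ≤ ENNReal.ofReal (Real.exp ε) * M v' o) :
    ∀ (k : ℕ) (v v' : Fin n → Fin m → Bool),
      (Finset.univ.filter fun p : Fin n × Fin m => v p.1 p.2 ≠ v' p.1 p.2).card ≤ k →
      ∀ o, M v o ≤ (ENNReal.ofReal (Real.exp ε)) ^ k * M v' o := by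
  have hK1 : (1 : ℝ≥0∞) ≤ ENNReal.ofReal (Real.exp ε) :=
    ENNReal.one_le_ofReal.mpr (Real.one_le_exp hε)
  intro k
  induction k with
  | zero =>
      intro v v' hcard o
      have hvv : v = v' := by
        funext i j
        by_contra hne
        have hmem : (i, j) ∈ (Finset.univ.filter
            fun p : Fin n × Fin m => v p.1 p.2 ≠ v' p.1 p.2) := by
          simp [hne]
        have := Finset.card_pos.mpr ⟨_, hmem⟩
        omega
      simp [hvv]
  | succ k ih =>
      intro v v' hcard o
      rcases Nat.eq_zero_or_pos
          (Finset.univ.filter fun p : Fin n × Fin m => v p.1 p.2 ≠ v' p.1 p.2).card with h0 | hpos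
      · have h := ih v v' (by omega) o
        refine h.trans ?_
        exact mul_le_mul_left (pow_le_pow_right₀ hK1 (Nat.le_succ k)) _
      · obtain ⟨p, hp⟩ := Finset.card_pos.mp hpos
        have hpne : v p.1 p.2 ≠ v' p.1 p.2 := (Finset.mem_filter.mp hp).2
        set v'' : Fin n → Fin m → Bool := fun i j => if (i, j) = p then v' i j else v i j with hv''
        have hv''p : v'' p.1 p.2 = v' p.1 p.2 := by
          simp [hv'']
        have hadj : ItemAdj v v'' := by
          refine ⟨p.1, p.2, ?_, ?_⟩
          · intro i hi
            funext j
            simp only [hv'']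
            rw [if_neg (fun h => hi (by simpa using congrArg Prod.fst h))]
          · intro j hj
            simp only [hv'']
            rw [if_neg (fun h => hj (by simpa using congrArg Prod.snd h))]
        have hsub : (Finset.univ.filter fun q : Fin n × Fin m => v'' q.1 q.2 ≠ v' q.1 q.2)
            ⊆ (Finset.univ.filter fun q : Fin n × Fin m => v q.1 q.2 ≠ v' q.1 q.2).erase p := by
          intro q hq
          rw [Finset.mem_filter] at hq
          have hqp : q ≠ p := by
            rintro rfl
            exact hq.2 hv''p
          have hq' : v q.1 q.2 ≠ v' q.1 q.2 := by
            have heq : v'' q.1 q.2 = v q.1 q.2 := by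
              simp only [hv'']
              rw [if_neg (fun h => hqp (by simpa using h))]
            have := hq.2
            rwa [heq] at this
          exact Finset.mem_erase.mpr ⟨hqp, Finset.mem_filter.mpr ⟨Finset.mem_univ _, hq'⟩⟩
        have hcard' : (Finset.univ.filter fun q : Fin n × Fin m => v'' q.1 q.2 ≠ v' q.1 q.2).card ≤ k := by
          have h1 := Finset.card_le_card hsub
          rw [Finset.card_erase_of_mem hp] at h1
          omega
        calc M v o ≤ ENNReal.ofReal (Real.exp ε) * M v'' o := hDP v v'' hadj o
          _ ≤ ENNReal.ofReal (Real.exp ε) * ((ENNReal.ofReal (Real.exp ε)) ^ k * M v' o) :=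
              mul_le_mul_right (ih v'' v' hcard' o) _
          _ = (ENNReal.ofReal (Real.exp ε)) ^ (k + 1) * M v' o := by ring

private def blockV (n m sB : ℕ) (t : ℕ) : Fin n → Fin m → Bool :=
  fun i j => decide (i.val < 2 ∧ t * sB ≤ j.val ∧ j.val < t * sB + sB)

private def Ev (n m sB c : ℕ) (t : ℕ) : Set (Alloc n m) :=
  {A : Alloc n m | ConnAlloc A.val ∧ PROP c (fun i => binUtil (blockV n m sB t i)) A.val}

private lemma hit_lemma {n m : ℕ} (hn : 3 ≤ n) {c sB t : ℕ}
    (hs : sB = n * (c + 1)) (htm : t * sB + sB ≤ m)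
    {A : Alloc n m} (hA : A ∈ Ev n m sB c t) {i : Fin n} (hi : i.val < 2) :
    ∃ j : Fin m, j ∈ A.val i ∧ t * sB ≤ j.val ∧ j.val < t * sB + sB := by
  obtain ⟨-, hprop⟩ := hA
  obtain ⟨S, hSsub, hScard, hineq⟩ := hprop i
  have hn0 : (0:ℝ) < n := by
    have : (0:ℕ) < n := by omega
    exact_mod_cast this
  have hunivcard : (Finset.univ.filter fun j : Fin m => blockV n m sB t i j = true).card = sB := by
    have heq : (Finset.univ.filter fun j : Fin m => blockV n m sB t i j = true)
        = Finset.attachFin (Finset.Ico (t * sB) (t * sB + sB)) (fun a ha => by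
            rw [Finset.mem_Ico] at ha; omega) := by
      ext j
      simp [blockV, Finset.mem_attachFin, Finset.mem_Ico, hi]
    rw [heq, Finset.card_attachFin, Nat.card_Ico]
    omega
  have huniv : binUtil (blockV n m sB t i) Finset.univ = (sB : ℝ) := by
    rw [binUtil, hunivcard]
  have hSle : binUtil (blockV n m sB t i) S ≤ (c : ℝ) := by
    rw [binUtil]
    have h1 : (S.filter fun j => blockV n m sB t i j = true).card ≤ S.card :=
      Finset.card_filter_le _ _
    exact_mod_cast le_trans h1 hScard
  have hsn : (sB : ℝ) / n = (c : ℝ) + 1 := by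
    rw [hs]
    push_cast
    field_simp
  simp only [] at hineq
  rw [huniv] at hineq
  have hac : (1:ℝ) ≤ (((A.val i).filter fun j => blockV n m sB t i j = true).card : ℝ) := by
    have hA' : binUtil (blockV n m sB t i) (A.val i)
        = (((A.val i).filter fun j => blockV n m sB t i j = true).card : ℝ) := rfl
    rw [hA'] at hineq
    linarith [hineq, hsn, hSle]
  have hpos : 0 < ((A.val i).filter fun j => blockV n m sB t i j = true).card := by
    exact_mod_cast lt_of_lt_of_le zero_lt_one hac
  obtain ⟨j, hj⟩ := Finset.card_pos.mp hpos
  rw [Finset.mem_filter] at hj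
  have hj2 := hj.2
  simp only [blockV, decide_eq_true_eq] at hj2
  exact ⟨j, hj.1, hj2.2.1, hj2.2.2⟩

private lemma disj_lemma {n m : ℕ} (hn : 3 ≤ n) {c sB : ℕ} (hs : sB = n * (c + 1))
    {t t' : ℕ} (htt : t < t') (htm : t * sB + sB ≤ m) (ht'm : t' * sB + sB ≤ m)
    {A : Alloc n m} (hAt : A ∈ Ev n m sB c t) (hAt' : A ∈ Ev n m sB c t') : False := by
  have hsB1 : 1 ≤ sB := by
    rw [hs]
    exact Nat.one_le_iff_ne_zero.mpr (by positivity)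
  have hps : t * sB + sB ≤ t' * sB := by
    have h1 : (t + 1) * sB ≤ t' * sB := Nat.mul_le_mul_right _ (by omega)
    calc t * sB + sB = (t + 1) * sB := by ring
      _ ≤ t' * sB := h1
  obtain ⟨a0, ha0A, ha0l, ha0r⟩ := hit_lemma hn hs htm hAt (i := ⟨0, by omega⟩) (by simp)
  obtain ⟨b0, hb0A, hb0l, hb0r⟩ := hit_lemma hn hs ht'm hAt' (i := ⟨0, by omega⟩) (by simp)
  obtain ⟨a1, ha1A, ha1l, ha1r⟩ := hit_lemma hn hs htm hAt (i := ⟨1, by omega⟩) (by simp)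
  obtain ⟨b1, hb1A, hb1l, hb1r⟩ := hit_lemma hn hs ht'm hAt' (i := ⟨1, by omega⟩) (by simp)
  have hpm : t * sB + sB - 1 < m := by
    have := b0.isLt
    omega
  set p : Fin m := ⟨t * sB + sB - 1, hpm⟩ with hpdef
  have hconn : ConnAlloc A.val := hAt.1
  have hp0 : p ∈ A.val ⟨0, by omega⟩ := by
    refine hconn _ a0 p b0 ha0A hb0A ?_ ?_
    · rw [Fin.le_def]; simp only [hpdef]; omega
    · rw [Fin.le_def]; simp only [hpdef]; omega
  have hp1 : p ∈ A.val ⟨1, by omega⟩ := by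
    refine hconn _ a1 p b1 ha1A hb1A ?_ ?_
    · rw [Fin.le_def]; simp only [hpdef]; omega
    · rw [Fin.le_def]; simp only [hpdef]; omega
  have hdis := A.prop.1 ⟨0, by omega⟩ ⟨1, by omega⟩ (by simp [Fin.ext_iff])
  exact Finset.disjoint_left.mp hdis hp0 hp1

private lemma main_aux {n m : ℕ} {ε : ℝ} (hε : 0 < ε) (hε1 : ε ≤ 1) (hn : 3 ≤ n) (hm : 1 ≤ m)
    (c : ℕ)
    (hceq : c = ⌊(0.01 : ℝ) * min (Real.log ((m : ℝ) / n) / (ε * n))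
        (min ((m : ℝ) / n) (Real.sqrt ((m : ℝ) / n)))⌋₊)
    (M : (Fin n → Fin m → Bool) → PMF (Alloc n m))
    (hDP : ∀ v v', ItemAdj v v' → ∀ o, M v o ≤ ENNReal.ofReal (Real.exp ε) * M v' o)
    (hcon : ∀ v : Fin n → Fin m → Bool,
      ENNReal.ofReal 0.5 ≤ (M v).toOuterMeasure
        {A : Alloc n m | ConnAlloc A.val ∧ PROP c (fun i => binUtil (v i)) A.val}) :
    False := by
  have hn0 : (0:ℝ) < n := by
    have : (0:ℕ) < n := by omega
    exact_mod_cast this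
  rcases Nat.eq_zero_or_pos c with hc0 | hc1
  · -- c = 0 : no connected PROP0 allocation at all for "all agents value only item 0"
    subst hc0
    set v : Fin n → Fin m → Bool := fun _ j => decide (j.val = 0) with hv
    have hempty : {A : Alloc n m | ConnAlloc A.val ∧ PROP 0 (fun i => binUtil (v i)) A.val}
        = (∅ : Set (Alloc n m)) := by
      rw [Set.eq_empty_iff_forall_notMem]
      rintro A ⟨-, hprop⟩
      have key : ∀ i : Fin n, (⟨0, by omega⟩ : Fin m) ∈ A.val i := by
        intro i
        obtain ⟨S, hSsub, hScard, hineq⟩ := hprop i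
        have hS0 : S = ∅ := Finset.card_eq_zero.mp (by omega)
        have huniv : binUtil (v i) Finset.univ = 1 := by
          rw [binUtil]
          have heq : (Finset.univ.filter fun j : Fin m => v i j = true)
              = {(⟨0, by omega⟩ : Fin m)} := by
            ext j
            simp [hv, Fin.ext_iff]
          rw [heq]
          simp
        have hSe : binUtil (v i) S = 0 := by simp [hS0, binUtil]
        simp only [] at hineq
        rw [huniv, hSe] at hineq
        have hac : (0:ℝ) < (((A.val i).filter fun j => v i j = true).card : ℝ) := by
          have hA' : binUtil (v i) (A.val i)
              = (((A.val i).filter fun j => v i j = true).card : ℝ) := rfl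
          rw [hA'] at hineq
          have : (0:ℝ) < 1 / n := by positivity
          linarith
        have hpos : 0 < ((A.val i).filter fun j => v i j = true).card := by
          exact_mod_cast hac
        obtain ⟨j, hj⟩ := Finset.card_pos.mp hpos
        rw [Finset.mem_filter] at hj
        have hj2 := hj.2
        simp only [hv, decide_eq_true_eq] at hj2
        have : j = (⟨0, by omega⟩ : Fin m) := Fin.ext hj2
        have hj1 := hj.1
        rwa [this] at hj1
      have hdis := A.prop.1 ⟨0, by omega⟩ ⟨1, by omega⟩ (by simp [Fin.ext_iff])
      exact Finset.disjoint_left.mp hdis (key _) (key _)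
    have hv05 := hcon v
    rw [hempty] at hv05
    rw [show ((M v).toOuterMeasure ∅) = 0 by simp [PMF.toOuterMeasure_apply]] at hv05
    have : (0.5 : ℝ) ≤ 0 := ENNReal.ofReal_eq_zero.mp (le_antisymm hv05 zero_le)
    norm_num at this
  · -- c ≥ 1 : counting + group privacy argument
    set R : ℝ := (m : ℝ) / n with hR
    have hX1 : (1:ℝ) ≤ 0.01 * min (Real.log R / (ε * n)) (min R (Real.sqrt R)) := by
      by_contra hlt
      push_neg at hlt
      have h0 : (⌊(0.01 : ℝ) * min (Real.log R / (ε * n)) (min R (Real.sqrt R))⌋₊ : ℕ) = 0 :=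
        Nat.floor_eq_zero.mpr hlt
      rw [hceq, h0] at hc1
      exact absurd hc1 (lt_irrefl 0)
    have h100 : (100:ℝ) ≤ min (Real.log R / (ε * n)) (min R (Real.sqrt R)) := by linarith
    have hcle : (c:ℝ) ≤ 0.01 * min (Real.log R / (ε * n)) (min R (Real.sqrt R)) := by
      rw [hceq]
      exact Nat.floor_le (by linarith)
    have hminL : min (Real.log R / (ε * n)) (min R (Real.sqrt R)) ≤ Real.log R / (ε * n) :=
      min_le_left _ _
    have hminR : min (Real.log R / (ε * n)) (min R (Real.sqrt R)) ≤ R :=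
      le_trans (min_le_right _ _) (min_le_left _ _)
    have hminsq : min (Real.log R / (ε * n)) (min R (Real.sqrt R)) ≤ Real.sqrt R :=
      le_trans (min_le_right _ _) (min_le_right _ _)
    have hsq100 : (100:ℝ) ≤ Real.sqrt R := le_trans h100 hminsq
    have hR100 : (100:ℝ) ≤ R := le_trans h100 hminR
    have hR0 : (0:ℝ) < R := by linarith
    have hεn : (0:ℝ) < ε * n := by positivity
    have hlog : (0:ℝ) < Real.log R := by
      have h1 : (100:ℝ) ≤ Real.log R / (ε * n) := le_trans h100 hminL
      have h2 : Real.log R = (Real.log R / (ε * n)) * (ε * n) := by field_simp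
      nlinarith
    have hcL : (c:ℝ) ≤ 0.01 * (Real.log R / (ε * n)) := le_trans hcle (by linarith)
    have hcsq : (c:ℝ) ≤ 0.01 * Real.sqrt R := le_trans hcle (by linarith)
    have henc : ε * n * (c:ℝ) ≤ 0.01 * Real.log R := by
      have h2 := mul_le_mul_of_nonneg_left hcL (le_of_lt hεn)
      have h3 : (ε * n) * (0.01 * (Real.log R / (ε * n))) = 0.01 * Real.log R := by
        field_simp
      linarith [h3.le, h3.ge]
    have hc1R : (1:ℝ) ≤ (c:ℝ) := by exact_mod_cast hc1
    set sB : ℕ := n * (c + 1) with hsB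
    set T : ℕ := m / sB with hT
    have hsBpos : 0 < sB := by
      rw [hsB]
      exact Nat.mul_pos (by omega) (Nat.succ_pos c)
    -- group privacy bound for our profiles vs the all-zero profile
    have hgp := groupPrivacy hε.le M hDP (2 * sB)
    have hKcard : ∀ t : ℕ, (Finset.univ.filter fun p : Fin n × Fin m =>
        blockV n m sB t p.1 p.2 ≠ (fun (_ : Fin n) (_ : Fin m) => false) p.1 p.2).card ≤ 2 * sB := by
      intro t
      have hsub : (Finset.univ.filter fun p : Fin n × Fin m =>
            blockV n m sB t p.1 p.2 ≠ (fun (_ : Fin n) (_ : Fin m) => false) p.1 p.2)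
          ⊆ (Finset.univ.filter fun i : Fin n => i.val < 2) ×ˢ
            (Finset.univ.filter fun j : Fin m => t * sB ≤ j.val ∧ j.val < t * sB + sB) := by
        intro p hp
        rw [Finset.mem_filter] at hp
        have hp2 := hp.2
        simp only [blockV, ne_eq, Bool.not_eq_false, decide_eq_true_eq] at hp2
        rw [Finset.mem_product, Finset.mem_filter, Finset.mem_filter]
        exact ⟨⟨Finset.mem_univ _, hp2.1⟩, ⟨Finset.mem_univ _, hp2.2.1, hp2.2.2⟩⟩
      have h1 : (Finset.univ.filter fun i : Fin n => i.val < 2).card ≤ 2 := by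
        calc (Finset.univ.filter fun i : Fin n => i.val < 2).card
            ≤ (Finset.range 2).card := Finset.card_le_card_of_injOn (fun i => i.val)
              (fun a ha => by
                rw [Finset.mem_coe, Finset.mem_filter] at ha
                rw [Finset.mem_coe, Finset.mem_range]
                exact ha.2)
              (Fin.val_injective.injOn)
          _ = 2 := Finset.card_range 2
      have h2 : (Finset.univ.filter fun j : Fin m => t * sB ≤ j.val ∧ j.val < t * sB + sB).card
          ≤ sB := by
        calc (Finset.univ.filter fun j : Fin m => t * sB ≤ j.val ∧ j.val < t * sB + sB).card
            ≤ (Finset.Ico (t * sB) (t * sB + sB)).card := Finset.card_le_card_of_injOn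
              (fun j => j.val)
              (fun a ha => by
                rw [Finset.mem_coe, Finset.mem_filter] at ha
                rw [Finset.mem_coe, Finset.mem_Ico]
                exact ha.2)
              (Fin.val_injective.injOn)
          _ = sB := by rw [Nat.card_Ico]; omega
      calc (Finset.univ.filter fun p : Fin n × Fin m =>
            blockV n m sB t p.1 p.2 ≠ (fun (_ : Fin n) (_ : Fin m) => false) p.1 p.2).card
          ≤ ((Finset.univ.filter fun i : Fin n => i.val < 2) ×ˢ
            (Finset.univ.filter fun j : Fin m => t * sB ≤ j.val ∧ j.val < t * sB + sB)).card :=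
            Finset.card_le_card hsub
        _ = (Finset.univ.filter fun i : Fin n => i.val < 2).card *
            (Finset.univ.filter fun j : Fin m => t * sB ≤ j.val ∧ j.val < t * sB + sB).card :=
            Finset.card_product _ _
        _ ≤ 2 * sB := Nat.mul_le_mul h1 h2
    have hEvle : ∀ t : ℕ, (M (blockV n m sB t)).toOuterMeasure (Ev n m sB c t)
        ≤ (ENNReal.ofReal (Real.exp ε)) ^ (2 * sB)
          * (M (fun _ _ => false)).toOuterMeasure (Ev n m sB c t) := by
      intro t
      rw [PMF.toOuterMeasure_apply, PMF.toOuterMeasure_apply, ← ENNReal.tsum_mul_left]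
      refine ENNReal.tsum_le_tsum fun a => ?_
      by_cases ha : a ∈ Ev n m sB c t
      · rw [Set.indicator_of_mem ha, Set.indicator_of_mem ha]
        exact hgp _ _ (hKcard t) a
      · rw [Set.indicator_of_notMem ha, Set.indicator_of_notMem ha]
        simp
    have hb : ∀ u : ℕ, u < T → u * sB + sB ≤ m := by
      intro u hu
      have h2 : (u + 1) * sB ≤ T * sB := Nat.mul_le_mul_right _ (by omega)
      have h3 : T * sB ≤ m := by rw [hT]; exact Nat.div_mul_le_self m sB
      calc u * sB + sB = (u + 1) * sB := by ring
        _ ≤ T * sB := h2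
        _ ≤ m := h3
    have hdisj : ∀ t₁, t₁ < T → ∀ t₂, t₂ < T → t₁ ≠ t₂ →
        ∀ a : Alloc n m, a ∈ Ev n m sB c t₁ → a ∉ Ev n m sB c t₂ := by
      intro t₁ h₁ t₂ h₂ hne a ha₁ ha₂
      rcases Nat.lt_or_ge t₁ t₂ with h | h
      · exact disj_lemma hn hsB h (hb t₁ h₁) (hb t₂ h₂) ha₁ ha₂
      · exact disj_lemma hn hsB (by omega) (hb t₂ h₂) (hb t₁ h₁) ha₂ ha₁
    have hsum : ∑ t ∈ Finset.range T,
        (M (fun _ _ => false)).toOuterMeasure (Ev n m sB c t) ≤ 1 := by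
      have key : ∀ a : Alloc n m,
          ∑ t ∈ Finset.range T, (Ev n m sB c t).indicator (⇑(M (fun _ _ => false))) a
            ≤ (M (fun _ _ => false)) a := by
        intro a
        by_cases hex : ∃ t ∈ Finset.range T, a ∈ Ev n m sB c t
        · obtain ⟨t0, ht0, ha0⟩ := hex
          rw [Finset.sum_eq_single_of_mem t0 ht0]
          · rw [Set.indicator_of_mem ha0]
          · intro t ht hne
            exact Set.indicator_of_notMem
              (hdisj t0 (Finset.mem_range.mp ht0) t (Finset.mem_range.mp ht) (Ne.symm hne) a ha0) _
        · push_neg at hex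
          have hz : ∀ t ∈ Finset.range T,
              (Ev n m sB c t).indicator (⇑(M (fun _ _ => false))) a = 0 :=
            fun t ht => Set.indicator_of_notMem (hex t ht) _
          rw [Finset.sum_congr rfl hz, Finset.sum_const, smul_zero]
          exact zero_le
      calc ∑ t ∈ Finset.range T, (M (fun _ _ => false)).toOuterMeasure (Ev n m sB c t)
          = ∑ t ∈ Finset.range T, ∑' a, (Ev n m sB c t).indicator (⇑(M (fun _ _ => false))) a := by
            simp_rw [PMF.toOuterMeasure_apply]
        _ = ∑' a, ∑ t ∈ Finset.range T, (Ev n m sB c t).indicator (⇑(M (fun _ _ => false))) a :=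
            (Summable.tsum_finsetSum fun i _ => ENNReal.summable).symm
        _ ≤ ∑' a, (M (fun _ _ => false)) a := ENNReal.tsum_le_tsum key
        _ = 1 := (M (fun _ _ => false)).tsum_coe
    have hchain : (T : ℝ≥0∞) * ENNReal.ofReal 0.5
        ≤ (ENNReal.ofReal (Real.exp ε)) ^ (2 * sB) := by
      have step1 : (T : ℝ≥0∞) * ENNReal.ofReal 0.5
          = ∑ t ∈ Finset.range T, ENNReal.ofReal 0.5 := by
        rw [Finset.sum_const, Finset.card_range, nsmul_eq_mul]
      rw [step1]
      calc ∑ t ∈ Finset.range T, ENNReal.ofReal 0.5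
          ≤ ∑ t ∈ Finset.range T, (M (blockV n m sB t)).toOuterMeasure (Ev n m sB c t) :=
            Finset.sum_le_sum fun t _ => hcon (blockV n m sB t)
        _ ≤ ∑ t ∈ Finset.range T, (ENNReal.ofReal (Real.exp ε)) ^ (2 * sB)
              * (M (fun _ _ => false)).toOuterMeasure (Ev n m sB c t) :=
            Finset.sum_le_sum fun t _ => hEvle t
        _ = (ENNReal.ofReal (Real.exp ε)) ^ (2 * sB)
              * ∑ t ∈ Finset.range T, (M (fun _ _ => false)).toOuterMeasure (Ev n m sB c t) :=
            (Finset.mul_sum _ _ _).symm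
        _ ≤ (ENNReal.ofReal (Real.exp ε)) ^ (2 * sB) * 1 := mul_le_mul_right hsum _
        _ = (ENNReal.ofReal (Real.exp ε)) ^ (2 * sB) := mul_one _
    have hpow : (ENNReal.ofReal (Real.exp ε)) ^ (2 * sB)
        = ENNReal.ofReal (Real.exp (2 * (sB:ℝ) * ε)) := by
      rw [← ENNReal.ofReal_pow (Real.exp_nonneg ε), ← Real.exp_nat_mul]
      congr 1
      push_cast
      ring
    have hlhs : (T : ℝ≥0∞) * ENNReal.ofReal 0.5 = ENNReal.ofReal ((T:ℝ) * 0.5) := by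
      rw [ENNReal.ofReal_mul (by positivity : (0:ℝ) ≤ (T:ℝ)), ENNReal.ofReal_natCast]
    rw [hlhs, hpow] at hchain
    have hreal : (T:ℝ) * 0.5 ≤ Real.exp (2 * (sB:ℝ) * ε) :=
      (ENNReal.ofReal_le_ofReal_iff (Real.exp_nonneg _)).mp hchain
    -- numeric contradiction
    clear hgp hKcard hEvle hb hdisj hsum hchain hpow hlhs hcon hDP M
    have hsBr : (sB:ℝ) = n * ((c:ℝ) + 1) := by rw [hsB]; push_cast; ring
    have hsle : (sB:ℝ) ≤ 2 * n * c := by rw [hsBr]; nlinarith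
    have hexp_arg : 2 * (sB:ℝ) * ε ≤ Real.log R / 2 := by
      have h4 : (sB:ℝ) * ε ≤ (2 * n * c) * ε := mul_le_mul_of_nonneg_right hsle hε.le
      have h5 : (2 * (n:ℝ) * c) * ε = 2 * (ε * n * c) := by ring
      linarith
    have hexp_sq : Real.exp (2 * (sB:ℝ) * ε) ≤ Real.sqrt R := by
      have h1 := Real.exp_le_exp.mpr hexp_arg
      have h2 : Real.exp (Real.log R / 2) = Real.sqrt R := by
        rw [← Real.log_sqrt hR0.le, Real.exp_log (Real.sqrt_pos.mpr hR0)]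
      linarith [h2.le, h2.ge]
    have hmR : (m:ℝ) = n * R := by rw [hR]; field_simp
    have hsq2 : Real.sqrt R * Real.sqrt R = R := Real.mul_self_sqrt hR0.le
    have hssq : (sB:ℝ) ≤ 0.02 * n * Real.sqrt R := by
      have h6 := mul_le_mul_of_nonneg_left hcsq (by positivity : (0:ℝ) ≤ 2 * (n:ℝ))
      linarith
    have hms : 50 * Real.sqrt R * (sB:ℝ) ≤ (m:ℝ) := by
      have h7 : 50 * Real.sqrt R * (sB:ℝ) ≤ 50 * Real.sqrt R * (0.02 * n * Real.sqrt R) :=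
        mul_le_mul_of_nonneg_left hssq (by positivity)
      have h8 : 50 * Real.sqrt R * (0.02 * (n:ℝ) * Real.sqrt R)
          = (n:ℝ) * (Real.sqrt R * Real.sqrt R) := by ring
      rw [hsq2] at h8
      linarith
    have hTm : (m:ℝ) < ((T:ℝ) + 1) * sB := by
      have h1 : m = sB * T + m % sB := by rw [hT]; exact (Nat.div_add_mod m sB).symm
      have h2 : m % sB < sB := Nat.mod_lt _ hsBpos
      have h1' : (m:ℝ) = (sB:ℝ) * (T:ℝ) + ((m % sB : ℕ):ℝ) := by exact_mod_cast h1
      have h2' : ((m % sB : ℕ):ℝ) < (sB:ℝ) := by exact_mod_cast h2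
      have h3' : ((T:ℝ) + 1) * sB = (sB:ℝ) * (T:ℝ) + sB := by ring
      linarith
    have hsBRpos : (0:ℝ) < (sB:ℝ) := by exact_mod_cast hsBpos
    have hT50 : 50 * Real.sqrt R < (T:ℝ) + 1 := by nlinarith
    have hfin : (T:ℝ) * 0.5 ≤ Real.sqrt R := le_trans hreal hexp_sq
    linarith

theorem item_level_PROP_lower_bound :
    ∃ ζ : ℝ, 0 < ζ ∧
      ∀ ε : ℝ, 0 < ε → ε ≤ 1 → ∀ n m : ℕ, 3 ≤ n → 1 ≤ m →
        ∀ M : (Fin n → Fin m → Bool) → PMF (Alloc n m),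
          (∀ v v', ItemAdj v v' →
            ∀ o, M v o ≤ ENNReal.ofReal (Real.exp ε) * M v' o) →
          ∃ v : Fin n → Fin m → Bool,
            (M v).toOuterMeasure
                {A : Alloc n m | ConnAlloc A.val ∧
                  PROP (⌊ζ * min (Real.log ((m : ℝ) / n) / (ε * n))
                        (min ((m : ℝ) / n) (Real.sqrt ((m : ℝ) / n)))⌋₊)
                    (fun i => binUtil (v i)) A.val}
              < ENNReal.ofReal 0.5 := by
  refine ⟨0.01, by norm_num, ?_⟩
  intro ε hε hε1 n m hn hm M hDP
  by_contra hcon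
  push_neg at hcon
  exact main_aux hε hε1 hn hm _ rfl M hDP hcon
end

section
/- Let n ≥ 3, m, c ≥ 1, and T ≥ 1 be integers satisfying (nc+1)·T ≤ m/2 and cn < m/2. For each t ∈ {1,…,T}, let u^t = (u^t_1,…,u^t_n) be the profile of binary additive utility functions over M = {1,…,m} given by: u^t_1(j) = u^t_2(j) = 1 if ⌊(j−1)/(nc+1)⌋ = t−1 and 0 otherwise; and for each agent i ∈ {3,…,n}, u^t_i(j) = 1 if j ≥ m − cn and 0 otherwise. Then for any distinct t, t' ∈ {1,…,T}, no connected allocation is simultaneously PROPc with respect to u^t and PROPc with respect to u^{t'}. -/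
/-- The binary values of the profile `u^t` from the PROP packing lower bound:
agents 1 and 2 (indices `0, 1`) value item `j` (1-indexed value `(j : ℕ) + 1`) iff
`⌊(j−1)/(nc+1)⌋ = t−1`; agents 3,…,n value item `j` iff `j ≥ m − cn`. -/
def uPROP (n m c t : ℕ) : Fin n → Fin m → Bool := fun i j =>
  if (i : ℕ) < 2 then decide ((j : ℕ) / (n * c + 1) = t - 1)
  else decide (m - c * n ≤ (j : ℕ) + 1)

lemma div_block_iff {j K t : ℕ} (hK : 0 < K) (_ht : 1 ≤ t) :
    j / K = t - 1 ↔ (t - 1) * K ≤ j ∧ j < t * K := by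
  have h1 : j / K < t ↔ j < t * K := Nat.div_lt_iff_lt_mul hK
  have h2 : t - 1 ≤ j / K ↔ (t - 1) * K ≤ j := Nat.le_div_iff_mul_le hK
  omega

lemma count_block {m K t : ℕ} (hK : 0 < K) (ht : 1 ≤ t) (hm : t * K ≤ m) :
    (Finset.univ.filter (fun j : Fin m => (j : ℕ) / K = t - 1)).card = K := by
  have hcard : (Finset.Ico ((t - 1) * K) (t * K)).card = K := by
    rw [Nat.card_Ico]
    obtain ⟨s, rfl⟩ : ∃ s, t = s + 1 := ⟨t - 1, by omega⟩
    simp only [Nat.add_sub_cancel]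
    have : (s + 1) * K = s * K + K := by ring
    omega
  have hbij : (Finset.univ.filter (fun j : Fin m => (j : ℕ) / K = t - 1)).card
      = (Finset.Ico ((t - 1) * K) (t * K)).card := by
    refine Finset.card_bij (fun (j : Fin m) _ => (j : ℕ)) ?_ ?_ ?_
    · intro j hj
      simp only [Finset.mem_filter, Finset.mem_univ, true_and] at hj
      rw [Finset.mem_Ico]
      exact (div_block_iff hK ht).mp hj
    · intro a ha b hb hab
      exact Fin.val_injective hab
    · intro x hx
      rw [Finset.mem_Ico] at hx
      refine ⟨⟨x, by omega⟩, ?_, rfl⟩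
      simp only [Finset.mem_filter, Finset.mem_univ, true_and]
      exact (div_block_iff hK ht).mpr hx
  rw [hbij, hcard]

lemma agent_has_block_item {n m c : ℕ} (t : ℕ) (hn : 3 ≤ n) (hc : 1 ≤ c) (ht : 1 ≤ t)
    (hm : t * (n * c + 1) ≤ m) (A : Fin n → Finset (Fin m)) (i : Fin n) (hi : (i : ℕ) < 2)
    (hP : PROP c (fun i => binUtil (uPROP n m c t i)) A) :
    ∃ j ∈ A i, (j : ℕ) / (n * c + 1) = t - 1 := by
  obtain ⟨S, hS, hScard, hval⟩ := hP i
  have hKpos : 0 < n * c + 1 := by positivity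
  have hu : ∀ F : Finset (Fin m), binUtil (uPROP n m c t i) F
      = ((F.filter fun j : Fin m => (j : ℕ) / (n * c + 1) = t - 1).card : ℝ) := by
    intro F
    unfold binUtil uPROP
    simp [hi]
  have huniv : binUtil (uPROP n m c t i) Finset.univ = ((n * c + 1 : ℕ) : ℝ) := by
    rw [hu, count_block hKpos ht hm]
  have hSle : binUtil (uPROP n m c t i) S ≤ (c : ℝ) := by
    rw [hu]
    exact_mod_cast le_trans (Finset.card_filter_le _ _) hScard
  have hn0 : (0 : ℝ) < (n : ℝ) := by positivity
  have harith : ((n * c + 1 : ℕ) : ℝ) / (n : ℝ) - (c : ℝ) = 1 / (n : ℝ) := by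
    push_cast
    field_simp
    ring
  have hpos : (0 : ℝ) < binUtil (uPROP n m c t i) (A i) := by
    have hval' : binUtil (uPROP n m c t i) (A i)
        ≥ binUtil (uPROP n m c t i) Finset.univ / (n : ℝ)
          - binUtil (uPROP n m c t i) S := hval
    rw [huniv] at hval'
    have : (0 : ℝ) < 1 / (n : ℝ) := by positivity
    linarith [hSle, hval']
  rw [hu] at hpos
  have hcardpos : 0 < ((A i).filter fun j : Fin m => (j : ℕ) / (n * c + 1) = t - 1).card := by
    exact_mod_cast hpos
  obtain ⟨j, hj⟩ := Finset.card_pos.mp hcardpos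
  simp only [Finset.mem_filter] at hj
  exact ⟨j, hj.1, hj.2⟩

theorem PROP_packing_disjoint (n m c T : ℕ) (hn : 3 ≤ n) (hc : 1 ≤ c) (hT : 1 ≤ T)
    (h1 : (((n * c + 1) * T : ℕ) : ℝ) ≤ (m : ℝ) / 2)
    (h2 : ((c * n : ℕ) : ℝ) < (m : ℝ) / 2) :
    ∀ t t' : ℕ, 1 ≤ t → t ≤ T → 1 ≤ t' → t' ≤ T → t ≠ t' →
      ∀ A : Fin n → Finset (Fin m), IsPartition A → ConnAlloc A →
        ¬ (PROP c (fun i => binUtil (uPROP n m c t i)) A ∧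
            PROP c (fun i => binUtil (uPROP n m c t' i)) A) := by
  intro t t' ht1 htT ht'1 ht'T hne A hPart hConn
  rintro ⟨hP, hP'⟩
  have hKpos : 0 < n * c + 1 := by positivity
  -- each relevant block fits inside the items
  have hm : ∀ s, 1 ≤ s → s ≤ T → s * (n * c + 1) ≤ m := by
    intro s hs1 hsT
    have hnat : s * (n * c + 1) ≤ (n * c + 1) * T := by
      calc s * (n * c + 1) ≤ T * (n * c + 1) := Nat.mul_le_mul_right _ hsT
        _ = (n * c + 1) * T := Nat.mul_comm _ _
    have hreal : ((s * (n * c + 1) : ℕ) : ℝ) ≤ (m : ℝ) := by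
      calc ((s * (n * c + 1) : ℕ) : ℝ) ≤ (((n * c + 1) * T : ℕ) : ℝ) := by exact_mod_cast hnat
        _ ≤ (m : ℝ) / 2 := h1
        _ ≤ (m : ℝ) := by
            have : (0 : ℝ) ≤ (m : ℝ) := Nat.cast_nonneg _
            linarith
    exact_mod_cast hreal
  -- main argument for s < s'
  have main : ∀ s s', 1 ≤ s → s ≤ T → 1 ≤ s' → s' ≤ T → s < s' →
      PROP c (fun i => binUtil (uPROP n m c s i)) A →
      PROP c (fun i => binUtil (uPROP n m c s' i)) A → False := by
    intro s s' hs1 hsT hs'1 hs'T hlt hPs hPs'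
    obtain ⟨j0, hj0A, hj0⟩ :=
      agent_has_block_item s hn hc hs1 (hm s hs1 hsT) A ⟨0, by omega⟩ (by simp) hPs
    obtain ⟨j1, hj1A, hj1⟩ :=
      agent_has_block_item s hn hc hs1 (hm s hs1 hsT) A ⟨1, by omega⟩ (by simp) hPs
    obtain ⟨j0', hj0'A, hj0'⟩ :=
      agent_has_block_item s' hn hc hs'1 (hm s' hs'1 hs'T) A ⟨0, by omega⟩ (by simp) hPs'
    obtain ⟨j1', hj1'A, hj1'⟩ :=
      agent_has_block_item s' hn hc hs'1 (hm s' hs'1 hs'T) A ⟨1, by omega⟩ (by simp) hPs'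
    have hb0 : (j0 : ℕ) < s * (n * c + 1) := ((div_block_iff hKpos hs1).mp hj0).2
    have hb1 : (j1 : ℕ) < s * (n * c + 1) := ((div_block_iff hKpos hs1).mp hj1).2
    have hs'le : s * (n * c + 1) ≤ (s' - 1) * (n * c + 1) :=
      Nat.mul_le_mul_right _ (by omega)
    have hb0' : s * (n * c + 1) ≤ (j0' : ℕ) :=
      le_trans hs'le ((div_block_iff hKpos hs'1).mp hj0').1
    have hb1' : s * (n * c + 1) ≤ (j1' : ℕ) :=
      le_trans hs'le ((div_block_iff hKpos hs'1).mp hj1').1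
    have hltm : s * (n * c + 1) < m := lt_of_le_of_lt hb0' j0'.isLt
    set b : Fin m := ⟨s * (n * c + 1), hltm⟩ with hb
    have hbin0 : b ∈ A ⟨0, by omega⟩ :=
      hConn _ j0 b j0' hj0A hj0'A (by rw [Fin.le_def]; simp [hb]; omega)
        (by rw [Fin.le_def]; simpa [hb] using hb0')
    have hbin1 : b ∈ A ⟨1, by omega⟩ :=
      hConn _ j1 b j1' hj1A hj1'A (by rw [Fin.le_def]; simp [hb]; omega)
        (by rw [Fin.le_def]; simpa [hb] using hb1')
    have hne01 : (⟨0, by omega⟩ : Fin n) ≠ ⟨1, by omega⟩ := by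
      intro h
      simpa using congrArg Fin.val h
    exact Finset.disjoint_left.mp (hPart.1 _ _ hne01) hbin0 hbin1
  rcases lt_or_gt_of_ne hne with h | h
  · exact main t t' ht1 htT ht'1 ht'T h hP hP'
  · exact main t' t ht'1 ht'T ht1 htT h hP' hP
end
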